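/- arXiv:1903.07229 — 8 statements merged into one kernel-verified Lean document; each statement's English description precedes it below -/
import Mathlib

section
/- The number Z_n of skew-symmetric (n,n)-clans is given by Z_n = Σ_{k=0}^{n} 2^{n−k}·C(n,k)·a_k. -/
/-- A skew-symmetric `(n,n)`-clan, encoded (via the standard bijection with signed
involutions) as a pair `(σ, s)` where `σ` is an involution of the `2n` positions whose
2-cycles are the pairs of positions carrying matching natural numbers, and `s` records
the signs at the fixed points (`true` = `+`, `false` = `−`; `s` is normalized to `true`
on non-fixed points).  The conditions say: `σ` is an involution; `s` is normalized;
there are equally many `+`'s and `−`'s among the sign symbols; and the clan equals its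
reverse with all signs interchanged (`Fin.rev` is the reflection `i ↦ 2n+1−i`). -/
def IsSkewClan (n : ℕ) (σ : Equiv.Perm (Fin (2 * n))) (s : Fin (2 * n) → Bool) : Prop :=
  Function.Involutive σ ∧
  (∀ i, σ i ≠ i → s i = true) ∧
  (Finset.univ.filter (fun i => σ i = i ∧ s i = true)).card =
    (Finset.univ.filter (fun i => σ i = i ∧ s i = false)).card ∧
  (∀ i, σ (Fin.rev i) = Fin.rev (σ i)) ∧
  (∀ i, σ i = i → s (Fin.rev i) = !(s i))

/-- `Z_n`, the number of skew-symmetric `(n,n)`-clans. -/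
noncomputable def Znum (n : ℕ) : ℕ :=
  Nat.card {p : Equiv.Perm (Fin (2 * n)) × (Fin (2 * n) → Bool) // IsSkewClan n p.1 p.2}

/-- `a_k := Σ_{b=0}^{⌊k/2⌋} C(k,2b)·(2b)!/b!` (the division is exact). -/
def aseq (k : ℕ) : ℕ :=
  ∑ b ∈ Finset.range (k / 2 + 1),
    Nat.choose k (2 * b) * (Nat.factorial (2 * b) / Nat.factorial b)

/-!
A skew-symmetric clan is a signed involution `σ` of the `2n` positions commuting with the
reflection `Fin.rev`, with opposite signs at mirror-image fixed points; the balance of signs is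
then automatic. Writing the positions as `Fin n × Bool`, the reflection flips the `Bool`, so `σ`
is determined by where it sends the first half: an involution `π` of `Fin n` and a `π`-invariant
flag telling whether `i` is matched with `π i` or with its mirror image. A fixed point of `π` thus
carries one of three labels (sign `+`, sign `−`, or matched with its own mirror) and a 2-cycle of
`π` one of two flavours, which is recorded by orienting it from a head to a tail. Choosing `b`
heads, `b` tails, a bijection between them and labels on the rest gives
`Z_n = ∑_b C(n,b) C(n-b,b) b! 3^(n-2b)`, and comparing coefficients of `X^(2b)` in
`(X + 3)^n = ((X + 1) + 2)^n` turns this into the stated formula.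
-/

open Finset Function Equiv Nat

section SkewInvolution

variable {X Y : Type*}

def IsSkewSignedInvolution (r : X → X) (σ : Perm X) (s : X → Bool) : Prop :=
  Involutive σ ∧ (∀ x, σ x ≠ x → s x = true) ∧ (∀ x, σ (r x) = r (σ x)) ∧
    ∀ x, σ x = x → s (r x) = !s x

abbrev SkewSignedInvolution (r : X → X) : Type _ :=
  {p : Perm X × (X → Bool) // IsSkewSignedInvolution r p.1 p.2}

lemma card_fixed_true_eq_card_fixed_false [Fintype X] [DecidableEq X] {r : X → X}
    (hr : Involutive r) {σ : Perm X} {s : X → Bool} (hσ : ∀ x, σ (r x) = r (σ x))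
    (hs : ∀ x, σ x = x → s (r x) = !s x) :
    #{x | σ x = x ∧ s x = true} = #{x | σ x = x ∧ s x = false} := by
  refine card_nbij' r r (fun x hx => ?_) (fun x hx => ?_) (fun x _ => hr x) (fun x _ => hr x)
  all_goals
    simp only [coe_filter, mem_univ, true_and, Set.mem_ofPred_eq] at hx ⊢
    simp [hσ, hx.1, hs x hx.1, hx.2]

lemma isSkewClan_iff {n : ℕ} (σ : Perm (Fin (2 * n))) (s : Fin (2 * n) → Bool) :
    IsSkewClan n σ s ↔ IsSkewSignedInvolution Fin.rev σ s := by
  refine ⟨fun ⟨h₁, h₂, _, h₄, h₅⟩ => ⟨h₁, h₂, h₄, h₅⟩, fun ⟨h₁, h₂, h₄, h₅⟩ => ⟨h₁, h₂, ?_, h₄, h₅⟩⟩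
  exact card_fixed_true_eq_card_fixed_false Fin.rev_involutive h₄ h₅

lemma isSkewSignedInvolution_permCongr {r : X → X} {r' : Y → Y} (e : X ≃ Y)
    (he : ∀ x, e (r x) = r' (e x)) (σ : Perm X) (s : X → Bool) :
    IsSkewSignedInvolution r' (e.permCongr σ) (s ∘ e.symm) ↔ IsSkewSignedInvolution r σ s := by
  have he' : ∀ y, e.symm (r' y) = r (e.symm y) := fun y => by
    rw [e.symm_apply_eq, he, e.apply_symm_apply]
  simp only [IsSkewSignedInvolution, Involutive, e.forall_congr_right.symm, permCongr_apply,
    comp_apply, symm_apply_apply, he', ← he, ne_eq, e.apply_eq_iff_eq]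

def SkewSignedInvolution.congr {r : X → X} {r' : Y → Y} (e : X ≃ Y)
    (he : ∀ x, e (r x) = r' (e x)) : SkewSignedInvolution r ≃ SkewSignedInvolution r' :=
  (e.permCongr.prodCongr (e.arrowCongr (Equiv.refl Bool))).subtypeEquiv fun p =>
    (isSkewSignedInvolution_permCongr e he p.1 p.2).symm

end SkewInvolution

def finProdBoolEquiv (n : ℕ) : Fin n × Bool ≃ Fin (2 * n) :=
  (prodComm _ _).trans <| (boolProdEquivSum _).trans <|
    ((Equiv.refl _).sumCongr Fin.revPerm).trans <| finSumFinEquiv.trans (finCongr (two_mul n).symm)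

lemma finProdBoolEquiv_false {n : ℕ} (i : Fin n) :
    finProdBoolEquiv n (i, false) = Fin.castLE (by omega) i := by
  ext
  simp [finProdBoolEquiv]

lemma finProdBoolEquiv_true {n : ℕ} (i : Fin n) :
    finProdBoolEquiv n (i, true) = Fin.rev (Fin.castLE (by omega) i) := by
  ext
  simp only [finProdBoolEquiv, trans_apply, prodComm_apply, Prod.swap_prod_mk,
    boolProdEquivSum_apply, ↓reduceIte, sumCongr_apply, Sum.map_inr, Fin.revPerm_apply,
    finSumFinEquiv_apply_right, Fin.natAdd_eq_addNat, finCongr_apply, Fin.val_cast,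
    Fin.val_addNat, Fin.val_rev, Fin.val_castLE]
  omega

lemma finProdBoolEquiv_map_not {n : ℕ} (x : Fin n × Bool) :
    finProdBoolEquiv n (Prod.map id not x) = Fin.rev (finProdBoolEquiv n x) := by
  obtain ⟨i, _ | _⟩ := x <;> simp [finProdBoolEquiv_false, finProdBoolEquiv_true]

section Fold

variable {α : Type*}

local notation "mirror" => (Prod.map id not : α × Bool → α × Bool)

/-- Encodes `σ (i, false) = (π i, c i)` and `s (i, false) = t i`. -/
def IsFoldData (π : α → α) (c t : α → Bool) : Prop :=
  Involutive π ∧ (∀ i, c (π i) = c i) ∧ ∀ i, t i = false → π i = i ∧ c i = false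

abbrev FoldData (α : Type*) : Type _ :=
  {q : (α → α) × (α → Bool) × (α → Bool) // IsFoldData q.1 q.2.1 q.2.2}

lemma apply_eq_of_map_not {σ : α × Bool → α × Bool} (h : ∀ x, σ (mirror x) = mirror (σ x))
    (i : α) (b : Bool) : σ (i, b) = ((σ (i, false)).1, xor b (σ (i, false)).2) := by
  cases b
  · simp
  · rw [Bool.true_xor]
    exact h (i, false)

lemma isFoldData_of_isSkewSignedInvolution {σ : Perm (α × Bool)} {s : α × Bool → Bool}
    (h : IsSkewSignedInvolution mirror σ s) :
    IsFoldData (fun i => (σ (i, false)).1) (fun i => (σ (i, false)).2)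
      (fun i => s (i, false)) := by
  obtain ⟨h₁, h₂, h₃, -⟩ := h
  have hinv : ∀ i, (σ ((σ (i, false)).1, false)).1 = i ∧
      (σ ((σ (i, false)).1, false)).2 = (σ (i, false)).2 := fun i => by
    have := h₁ (i, false)
    rw [← Prod.mk.eta (p := σ (i, false)), apply_eq_of_map_not h₃] at this
    simpa [Prod.ext_iff, eq_comm (a := (σ (i, false)).2)] using this
  refine ⟨fun i => (hinv i).1, fun i => (hinv i).2, fun i hi => ?_⟩
  have hfix : σ (i, false) = (i, false) := by
    by_contra hne
    simp [h₂ _ hne] at hi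
  simp [hfix]

variable {π : α → α} {c t : α → Bool}

def foldMap (π : α → α) (c : α → Bool) (x : α × Bool) : α × Bool :=
  (π x.1, xor x.2 (c x.1))

lemma IsFoldData.involutive_foldMap (h : IsFoldData π c t) : Involutive (foldMap π c) :=
  fun x => by simp [foldMap, h.1 x.1, h.2.1 x.1]

lemma foldMap_eq_self_iff (x : α × Bool) :
    foldMap π c x = x ↔ π x.1 = x.1 ∧ c x.1 = false := by
  obtain ⟨i, b⟩ := x
  cases b <;> cases hc : c i <;> simp [foldMap, Prod.ext_iff, hc]

variable [DecidableEq α]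

def foldSign (π : α → α) (c t : α → Bool) (x : α × Bool) : Bool :=
  if x.2 = true ∧ π x.1 = x.1 ∧ c x.1 = false then !t x.1 else t x.1

lemma IsFoldData.isSkewSignedInvolution (h : IsFoldData π c t) :
    IsSkewSignedInvolution mirror h.involutive_foldMap.toPerm (foldSign π c t) := by
  simp only [IsSkewSignedInvolution, Involutive.coe_toPerm, ne_eq, foldMap_eq_self_iff]
  refine ⟨h.involutive_foldMap, fun x hx => ?_, fun x => (by simp [foldMap]), fun x hx => ?_⟩
  · have ht : t x.1 = true := by
      by_contra ht
      exact hx (h.2.2 _ (by simpa using ht))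
    rw [foldSign, if_neg fun h' => hx h'.2, ht]
  · obtain ⟨i, b⟩ := x
    obtain ⟨hπ, hc⟩ := hx
    cases b <;> simp [foldSign, hπ, hc]

lemma foldSign_eq_of_isSkewSignedInvolution {σ : Perm (α × Bool)} {s : α × Bool → Bool}
    (h : IsSkewSignedInvolution mirror σ s) :
    foldSign (fun i => (σ (i, false)).1) (fun i => (σ (i, false)).2) (fun i => s (i, false)) =
      s := by
  obtain ⟨-, h₂, h₃, h₄⟩ := h
  funext ⟨i, b⟩
  cases b
  · simp [foldSign]
  by_cases hfix : σ (i, false) = (i, false)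
  · simpa [foldSign, hfix] using (h₄ _ hfix).symm
  · have hne : σ (i, true) ≠ (i, true) := by
      rw [apply_eq_of_map_not h₃]
      contrapose! hfix
      simpa [Prod.ext_iff] using hfix
    rw [foldSign, if_neg fun h => hfix (Prod.ext h.2.1 h.2.2), h₂ _ hne, h₂ _ hfix]

def skewSignedInvolutionEquivFoldData : SkewSignedInvolution mirror ≃ FoldData α where
  toFun p := ⟨(fun i => (p.1.1 (i, false)).1, fun i => (p.1.1 (i, false)).2,
    fun i => p.1.2 (i, false)), isFoldData_of_isSkewSignedInvolution p.2⟩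
  invFun q := ⟨(q.2.involutive_foldMap.toPerm, foldSign q.1.1 q.1.2.1 q.1.2.2),
    q.2.isSkewSignedInvolution⟩
  left_inv p := by
    ext1
    refine Prod.ext (Equiv.ext fun x => ?_) (foldSign_eq_of_isSkewSignedInvolution p.2)
    simp [foldMap, apply_eq_of_map_not p.2.2.2.1 x.1 x.2]
  right_inv q := by
    ext1
    simp [foldMap, foldSign]

end Fold

section Labelling

variable {α : Type*}

/-- Labels `0`, `1`: fixed point signed `+`, `−`; `2`: matched with its own mirror image;
`3`, `4`: head and tail of a 2-cycle of `π`. -/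
def IsHeadTailPairing (g : α → Fin 5) (π : α → α) : Prop :=
  Involutive π ∧ (∀ i, g i = 3 → g (π i) = 4) ∧ (∀ i, g i = 4 → g (π i) = 3) ∧
    ∀ i, g i ≠ 3 → g i ≠ 4 → π i = i

abbrev HeadTailPairing (α : Type*) : Type _ :=
  {q : (α → Fin 5) × (α → α) // IsHeadTailPairing q.1 q.2}

lemma IsHeadTailPairing.apply_ne_self {g : α → Fin 5} {π : α → α} (h : IsHeadTailPairing g π)
    {i : α} (hi : g i = 3 ∨ g i = 4) : π i ≠ i := by
  intro hfix
  rcases hi with hg | hg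
  · simpa [hfix, hg] using h.2.1 i hg
  · simpa [hfix, hg] using h.2.2.1 i hg

variable {g : α → Fin 5}

def pairingOfEquiv (e : {i // g i = 3} ≃ {i // g i = 4}) (i : α) : α :=
  if h₃ : g i = 3 then e ⟨i, h₃⟩ else if h₄ : g i = 4 then e.symm ⟨i, h₄⟩ else i

lemma pairingOfEquiv_of_three (e : {i // g i = 3} ≃ {i // g i = 4}) {i : α} (h : g i = 3) :
    pairingOfEquiv e i = e ⟨i, h⟩ := dif_pos h

lemma pairingOfEquiv_of_four (e : {i // g i = 3} ≃ {i // g i = 4}) {i : α} (h : g i = 4) :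
    pairingOfEquiv e i = e.symm ⟨i, h⟩ := by
  rw [pairingOfEquiv, dif_neg (by simp [h]), dif_pos h]

lemma isHeadTailPairing_pairingOfEquiv (e : {i // g i = 3} ≃ {i // g i = 4}) :
    IsHeadTailPairing g (pairingOfEquiv e) := by
  refine ⟨fun i => ?_, fun i h => ?_, fun i h => ?_, fun i h₃ h₄ => ?_⟩
  · by_cases h₃ : g i = 3
    · rw [pairingOfEquiv_of_three e h₃, pairingOfEquiv_of_four e (e ⟨i, h₃⟩).2]
      simp
    by_cases h₄ : g i = 4
    · rw [pairingOfEquiv_of_four e h₄, pairingOfEquiv_of_three e (e.symm ⟨i, h₄⟩).2]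
      simp
    · simp [pairingOfEquiv, h₃, h₄]
  · rw [pairingOfEquiv_of_three e h]
    exact (e _).2
  · rw [pairingOfEquiv_of_four e h]
    exact (e.symm _).2
  · simp [pairingOfEquiv, h₃, h₄]

def headTailPairingEquiv (g : α → Fin 5) :
    {π // IsHeadTailPairing g π} ≃ ({i // g i = 3} ≃ {i // g i = 4}) where
  toFun π :=
    { toFun := fun i => ⟨π.1 i, π.2.2.1 i i.2⟩
      invFun := fun i => ⟨π.1 i, π.2.2.2.1 i i.2⟩
      left_inv := fun i => Subtype.ext (π.2.1 i)
      right_inv := fun i => Subtype.ext (π.2.1 i) }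
  invFun e := ⟨pairingOfEquiv e, isHeadTailPairing_pairingOfEquiv e⟩
  left_inv π := by
    refine Subtype.ext (funext fun i => ?_)
    by_cases h₃₄ : g i = 3 ∨ g i = 4
    · rcases h₃₄ with h | h
      · simp [pairingOfEquiv_of_three _ h]
      · simp [pairingOfEquiv_of_four _ h]
    · rw [not_or] at h₃₄
      simp [pairingOfEquiv, h₃₄, π.2.2.2.2 i h₃₄.1 h₃₄.2]
  right_inv e := by
    ext i
    simp [pairingOfEquiv_of_three _ i.2]

variable [LinearOrder α]

/-- A 2-cycle `{i, j}`, `i < j`, of `π` has head `i` if it matches the two first-half positions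
and head `j` if it matches a first-half with a second-half position. -/
def foldLabel (π : α → α) (c t : α → Bool) (i : α) : Fin 5 :=
  if π i = i then (if c i then 2 else if t i then 0 else 1)
  else if c i = decide (π i < i) then 3 else 4

def labelCross (g : α → Fin 5) (π : α → α) (i : α) : Bool :=
  decide (g i = 2 ∨ g i = 3 ∧ π i < i ∨ g i = 4 ∧ i < π i)

def labelSign (g : α → Fin 5) (i : α) : Bool := decide (g i ≠ 1)

lemma foldLabel_eq_three_iff {π : α → α} {c t : α → Bool} {i : α} :
    foldLabel π c t i = 3 ↔ π i ≠ i ∧ c i = decide (π i < i) := by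
  unfold foldLabel
  split_ifs <;> simp_all

lemma foldLabel_eq_four_iff {π : α → α} {c t : α → Bool} {i : α} :
    foldLabel π c t i = 4 ↔ π i ≠ i ∧ c i = decide (i < π i) := by
  unfold foldLabel
  by_cases hfix : π i = i
  · simp only [hfix]
    split_ifs <;> simp
  · rcases lt_or_gt_of_ne hfix with hlt | hlt <;> cases c i <;> simp [hfix, hlt, hlt.not_gt]

lemma IsFoldData.isHeadTailPairing {π : α → α} {c t : α → Bool} (h : IsFoldData π c t) :
    IsHeadTailPairing (foldLabel π c t) π := by
  obtain ⟨h₁, h₂, h₃⟩ := h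
  refine ⟨h₁, fun i hi => ?_, fun i hi => ?_, fun i hi₃ hi₄ => ?_⟩
  · rw [foldLabel_eq_three_iff] at hi
    rw [foldLabel_eq_four_iff, h₁, h₂, hi.2]
    exact ⟨hi.1.symm, rfl⟩
  · rw [foldLabel_eq_four_iff] at hi
    rw [foldLabel_eq_three_iff, h₁, h₂, hi.2]
    exact ⟨hi.1.symm, rfl⟩
  · by_contra hne
    unfold foldLabel at hi₃ hi₄
    split_ifs at hi₃ hi₄ <;> simp_all

lemma IsHeadTailPairing.isFoldData {g : α → Fin 5} {π : α → α} (h : IsHeadTailPairing g π) :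
    IsFoldData π (labelCross g π) (labelSign g) := by
  obtain ⟨h₁, h₂, h₃, h₄⟩ := h
  refine ⟨h₁, fun i => ?_, fun i hi => ?_⟩
  · by_cases h₃₄ : g i = 3 ∨ g i = 4
    · rcases h₃₄ with hg | hg <;> simp [labelCross, hg, h₂ i, h₃ i, h₁ i]
    · rw [not_or] at h₃₄
      rw [h₄ i h₃₄.1 h₃₄.2]
  · have hg : g i = 1 := by simpa [labelSign] using hi
    have hfix := h₄ i (by simp [hg]) (by simp [hg])
    simp [labelCross, hg, hfix]

def foldDataEquivHeadTailPairing : FoldData α ≃ HeadTailPairing α where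
  toFun q := ⟨(foldLabel q.1.1 q.1.2.1 q.1.2.2, q.1.1), q.2.isHeadTailPairing⟩
  invFun p := ⟨(p.1.2, labelCross p.1.1 p.1.2, labelSign p.1.1), p.2.isFoldData⟩
  left_inv := by
    rintro ⟨⟨π, c, t⟩, h⟩
    refine Subtype.ext (Prod.ext rfl (Prod.ext (funext fun i => ?_) (funext fun i => ?_)))
    · by_cases hfix : π i = i
      · cases hc : c i <;> cases ht : t i <;> simp [labelCross, foldLabel, hfix, hc, ht]
      · rcases lt_or_gt_of_ne hfix with hlt | hlt <;> cases hc : c i <;>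
          simp [labelCross, foldLabel, hfix, hlt, hlt.not_gt, hc]
    · cases ht : t i
      · obtain ⟨hfix, hc⟩ : π i = i ∧ c i = false := h.2.2 i ht
        simp [labelSign, foldLabel, hfix, hc, ht]
      · simp only [labelSign, foldLabel, ht]
        split_ifs <;> simp
  right_inv := by
    rintro ⟨⟨g, π⟩, h⟩
    refine Subtype.ext (Prod.ext (funext fun i => ?_) rfl)
    by_cases h₃₄ : g i = 3 ∨ g i = 4
    · have hne := h.apply_ne_self h₃₄
      rcases lt_or_gt_of_ne hne with hlt | hlt <;> rcases h₃₄ with hg | hg <;>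
        simp [foldLabel, labelCross, hne, hlt, hlt.not_gt, hg]
    · rw [not_or] at h₃₄
      have hfix : π i = i := h.2.2.2 i h₃₄.1 h₃₄.2
      obtain hg | hg | hg : g i = 0 ∨ g i = 1 ∨ g i = 2 := by omega
      all_goals simp [foldLabel, labelCross, labelSign, hfix, hg]

end Labelling

lemma card_equiv_eq_ite {β γ : Type*} [Finite β] [Finite γ] :
    Nat.card (β ≃ γ) = if Nat.card β = Nat.card γ then (Nat.card β)! else 0 := by
  split_ifs with h
  · obtain ⟨e⟩ := Finite.card_eq.mp h
    rw [Nat.card_congr ((Equiv.refl β).equivCongr e.symm), Nat.card_perm]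
  · rw [Nat.card_eq_zero]
    exact Or.inl ⟨fun e => h (Nat.card_congr e)⟩

section Counting

variable {α : Type*} [Fintype α] [DecidableEq α]

lemma card_headTailPairing :
    Nat.card (HeadTailPairing α) = ∑ g : α → Fin 5,
      if #{i | g i = 3} = #{i | g i = 4} then (#{i | g i = 3})! else 0 := by
  rw [Nat.card_congr (subtypeProdEquivSigmaSubtype fun g π => IsHeadTailPairing g π),
    Nat.card_sigma]
  refine sum_congr rfl fun g _ => ?_
  rw [Nat.card_congr (headTailPairingEquiv g), card_equiv_eq_ite, Nat.card_eq_fintype_card,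
    Nat.card_eq_fintype_card, Fintype.card_subtype, Fintype.card_subtype]

lemma card_labelling_fiber (A B : Finset α) :
    #{g : α → Fin 5 | ({i | g i = 3} : Finset α) = A ∧ ({i | g i = 4} : Finset α) = B} =
      if Disjoint A B then 3 ^ (Fintype.card α - #A - #B) else 0 := by
  split_ifs with hAB
  · have : ({g : α → Fin 5 | ({i | g i = 3} : Finset α) = A ∧ ({i | g i = 4} : Finset α) = B} :
        Finset (α → Fin 5)) = Fintype.piFinset fun i =>
          if i ∈ A then {3} else if i ∈ B then {4} else ({0, 1, 2} : Finset (Fin 5)) := by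
      ext g
      simp only [mem_filter, mem_univ, true_and, Fintype.mem_piFinset, Finset.ext_iff]
      refine ⟨fun ⟨h₃, h₄⟩ i => ?_, fun h => ⟨fun i => ?_, fun i => ?_⟩⟩
      · by_cases hA : i ∈ A
        · simp [hA, (h₃ i).mpr hA]
        by_cases hB : i ∈ B
        · simp [hA, hB, (h₄ i).mpr hB]
        · have := mt (h₃ i).mp hA
          have := mt (h₄ i).mp hB
          simp only [hA, hB, if_false, mem_insert, mem_singleton]
          omega
      all_goals
        have hi := h i
        by_cases hA : i ∈ A <;> by_cases hB : i ∈ B <;> simp_all [Finset.disjoint_left.mp hAB]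
        omega
    rw [this, Fintype.card_piFinset]
    calc ∏ i, #(if i ∈ A then {3} else if i ∈ B then {4} else ({0, 1, 2} : Finset (Fin 5)))
        = ∏ i, if i ∈ A ∪ B then 1 else 3 := prod_congr rfl fun i _ => by
          by_cases hA : i ∈ A <;> by_cases hB : i ∈ B <;> simp [hA, hB]
      _ = 3 ^ #(A ∪ B)ᶜ := by
          rw [prod_ite, prod_const_one, one_mul, prod_const, filter_not, filter_mem_eq_inter,
            univ_inter, compl_eq_univ_sdiff]
      _ = 3 ^ (Fintype.card α - #A - #B) := by
          rw [card_compl, card_union_of_disjoint hAB, Nat.sub_sub]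
  · rw [Finset.card_eq_zero, filter_eq_empty_iff]
    rintro g - ⟨rfl, rfl⟩
    exact hAB (disjoint_filter.mpr fun i _ h₃ h₄ => by simp [h₃] at h₄)

theorem sum_labelling_eq (f : ℕ → ℕ) :
    ∑ g : α → Fin 5, (if #{i | g i = 3} = #{i | g i = 4} then f #{i | g i = 3} else 0) =
      ∑ b ∈ range (Fintype.card α + 1),
        (Fintype.card α).choose b * (Fintype.card α - b).choose b *
          3 ^ (Fintype.card α - 2 * b) * f b := by
  set n := Fintype.card α with hn
  have hB (A : Finset α) : ∑ B : Finset α,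
      (if Disjoint A B then 3 ^ (n - #A - #B) else 0) * (if #A = #B then f #A else 0) =
        (n - #A).choose #A * 3 ^ (n - 2 * #A) * f #A := by
    calc ∑ B : Finset α, (if Disjoint A B then 3 ^ (n - #A - #B) else 0) *
          (if #A = #B then f #A else 0)
        = ∑ B : Finset α, if B ∈ powersetCard #A Aᶜ then 3 ^ (n - 2 * #A) * f #A else 0 :=
          sum_congr rfl fun B _ => by
            simp only [mem_powersetCard, subset_compl_iff_disjoint_left]
            rcases eq_or_ne #B #A with hc | hc
            · by_cases hd : Disjoint A B <;> simp [hd, hc, two_mul, Nat.sub_sub]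
            · simp [hc, hc.symm]
      _ = (n - #A).choose #A * 3 ^ (n - 2 * #A) * f #A := by
          rw [sum_ite_mem, univ_inter, sum_const, card_powersetCard, card_compl, smul_eq_mul,
            mul_assoc]
  rw [← sum_fiberwise' univ
    (fun g : α → Fin 5 => (({i | g i = 3} : Finset α), ({i | g i = 4} : Finset α)))
    fun p => if #p.1 = #p.2 then f #p.1 else 0]
  simp only [sum_const, smul_eq_mul, Prod.ext_iff, card_labelling_fiber, Fintype.sum_prod_type,
    ← hn, hB]
  rw [← powerset_univ, sum_powerset_apply_card fun b => (n - b).choose b * 3 ^ (n - 2 * b) * f b,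
    Finset.card_univ, ← hn]
  exact sum_congr rfl fun b _ => by rw [smul_eq_mul]; ring

end Counting

open Polynomial in
theorem sum_two_pow_mul_choose_mul_choose (n m : ℕ) :
    ∑ k ∈ range (n + 1), 2 ^ (n - k) * n.choose k * k.choose m = n.choose m * 3 ^ (n - m) := by
  have h := coeff_X_add_C_pow (3 : ℕ) n m
  rw [show (X + C 3 : ℕ[X]) = X + C 1 + C 2 by rw [add_assoc, ← C_add], add_pow,
    finsetSum_coeff] at h
  simp only [← C_pow, ← C_eq_natCast, coeff_mul_C, coeff_X_add_C_pow, one_pow, one_mul,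
    Nat.cast_id] at h
  rw [mul_comm, ← h]
  exact sum_congr rfl fun k _ => by ring

lemma factorial_two_mul_div_factorial (b : ℕ) : (2 * b)! / b ! = (2 * b).choose b * b ! := by
  refine Nat.div_eq_of_eq_mul_left b.factorial_pos ?_
  simpa [two_mul] using (Nat.add_choose_mul_factorial_mul_factorial b b).symm

lemma aseq_eq_sum_range {k n : ℕ} (hk : k ≤ n) :
    aseq k = ∑ b ∈ range (n + 1), k.choose (2 * b) * ((2 * b).choose b * b !) := by
  rw [aseq]
  refine sum_subset_zero_on_sdiff (by intro b; simp; omega) (fun b hb => ?_) fun b _ => ?_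
  · rw [mem_sdiff, mem_range, mem_range] at hb
    rw [Nat.choose_eq_zero_of_lt (by omega), zero_mul]
  · rw [factorial_two_mul_div_factorial]

theorem sum_two_pow_mul_choose_mul_aseq (n : ℕ) :
    ∑ k ∈ range (n + 1), 2 ^ (n - k) * n.choose k * aseq k =
      ∑ b ∈ range (n + 1), n.choose b * (n - b).choose b * 3 ^ (n - 2 * b) * b ! := by
  calc ∑ k ∈ range (n + 1), 2 ^ (n - k) * n.choose k * aseq k
      = ∑ k ∈ range (n + 1), ∑ b ∈ range (n + 1),
          (2 * b).choose b * b ! * (2 ^ (n - k) * n.choose k * k.choose (2 * b)) := by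
        refine sum_congr rfl fun k hk => ?_
        rw [aseq_eq_sum_range (mem_range_succ_iff.mp hk), mul_sum]
        exact sum_congr rfl fun b _ => by ring
    _ = ∑ b ∈ range (n + 1), (2 * b).choose b * b ! * (n.choose (2 * b) * 3 ^ (n - 2 * b)) := by
        rw [sum_comm]
        simp only [← mul_sum, sum_two_pow_mul_choose_mul_choose]
    _ = _ := by
        refine sum_congr rfl fun b _ => ?_
        have := Nat.choose_mul (n := n) (show b ≤ 2 * b by omega)
        rw [show 2 * b - b = b by omega] at this
        rw [← this]; ring

lemma znum_eq_card_headTailPairing (n : ℕ) : Znum n = Nat.card (HeadTailPairing (Fin n)) :=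
  Nat.card_congr <|
    (subtypeEquivRight fun p : Perm (Fin (2 * n)) × (Fin (2 * n) → Bool) =>
      isSkewClan_iff p.1 p.2).trans <|
    (SkewSignedInvolution.congr (finProdBoolEquiv n) finProdBoolEquiv_map_not).symm.trans <|
      skewSignedInvolutionEquivFoldData.trans foldDataEquivHeadTailPairing

/-- `Z_n = Σ_{k=0}^{n} 2^(n−k)·C(n,k)·a_k`. -/
theorem stmt3 (n : ℕ) :
    Znum n = ∑ k ∈ Finset.range (n + 1), 2 ^ (n - k) * Nat.choose n k * aseq k := by
  rw [znum_eq_card_headTailPairing, card_headTailPairing, sum_labelling_eq, Fintype.card_fin,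
    sum_two_pow_mul_choose_mul_aseq]
end

section
/- The sequence a_k defined by a_k := Σ_{b=0}^{⌊k/2⌋} C(k,2b)·(2b)!/b! satisfies a_0 = a_1 = 1 and the recurrence a_k = a_{k−1} + 2(k−1)·a_{k−2} for all k ≥ 2. -/
private def T (n b : ℕ) : ℕ :=
  Nat.choose n (2 * b) * (Nat.factorial (2 * b) / Nat.factorial b)

private lemma Dsucc (b : ℕ) :
    Nat.factorial (2 * (b + 1)) / Nat.factorial (b + 1)
      = 2 * (2 * b + 1) * (Nat.factorial (2 * b) / Nat.factorial b) := by
  obtain ⟨c, hc⟩ := Nat.factorial_dvd_factorial (show b ≤ 2 * b by omega)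
  have h1 : Nat.factorial (2 * b) / Nat.factorial b = c := by
    rw [hc, Nat.mul_div_cancel_left _ (Nat.factorial_pos b)]
  have h2 : Nat.factorial (2 * (b + 1))
      = Nat.factorial (b + 1) * (2 * (2 * b + 1) * c) := by
    have : 2 * (b + 1) = (2 * b + 1) + 1 := by ring
    rw [this, Nat.factorial_succ, Nat.factorial_succ, hc, Nat.factorial_succ]
    ring
  rw [h1, h2, Nat.mul_div_cancel_left _ (Nat.factorial_pos (b + 1))]

private lemma term_rec (k b : ℕ) :
    T (k + 2) (b + 1) = T (k + 1) (b + 1) + 2 * (k + 1) * T k b := by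
  unfold T
  have hch : Nat.choose (k + 2) (2 * (b + 1))
      = Nat.choose (k + 1) (2 * (b + 1)) + Nat.choose (k + 1) (2 * b + 1) := by
    have : 2 * (b + 1) = (2 * b + 1) + 1 := by ring
    rw [this, Nat.choose_succ_succ' (k + 1) (2 * b + 1)]
    ring
  have hmc : (2 * b + 1) * Nat.choose (k + 1) (2 * b + 1)
      = (k + 1) * Nat.choose k (2 * b) := by
    rw [mul_comm]
    exact (Nat.add_one_mul_choose_eq k (2 * b)).symm
  rw [hch, add_mul, Dsucc]
  congr 1
  calc Nat.choose (k + 1) (2 * b + 1) * (2 * (2 * b + 1) * (Nat.factorial (2 * b) / Nat.factorial b))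
      = 2 * ((2 * b + 1) * Nat.choose (k + 1) (2 * b + 1)) * (Nat.factorial (2 * b) / Nat.factorial b) := by ring
    _ = 2 * ((k + 1) * Nat.choose k (2 * b)) * (Nat.factorial (2 * b) / Nat.factorial b) := by rw [hmc]
    _ = 2 * (k + 1) * (Nat.choose k (2 * b) * (Nat.factorial (2 * b) / Nat.factorial b)) := by ring

private lemma aseq_eq_sum (n m : ℕ) (h : n / 2 + 1 ≤ m) :
    aseq n = ∑ b ∈ Finset.range m, T n b := by
  unfold aseq T
  refine Finset.sum_subset ?_ ?_
  · intro b hb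
    exact Finset.mem_range.mpr (lt_of_lt_of_le (Finset.mem_range.mp hb) h)
  · intro b _ hb
    have hb' : n / 2 + 1 ≤ b := by
      by_contra hbc
      exact hb (Finset.mem_range.mpr (by omega))
    have : n < 2 * b := by omega
    rw [Nat.choose_eq_zero_of_lt this, zero_mul]

/-- `a_0 = a_1 = 1` and `a_k = a_{k−1} + 2(k−1)·a_{k−2}` for all `k ≥ 2`. -/
theorem stmt4 :
    aseq 0 = 1 ∧ aseq 1 = 1 ∧
    ∀ k : ℕ, 2 ≤ k → aseq k = aseq (k - 1) + 2 * (k - 1) * aseq (k - 2) := by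
  refine ⟨by decide, by decide, ?_⟩
  intro k hk
  obtain ⟨j, rfl⟩ : ∃ j, k = j + 2 := ⟨k - 2, by omega⟩
  simp only [Nat.add_sub_cancel, show j + 2 - 1 = j + 1 from rfl]
  have h2 : aseq (j + 2) = ∑ b ∈ Finset.range (j + 3), T (j + 2) b :=
    aseq_eq_sum _ _ (by omega)
  have h1 : aseq (j + 1) = ∑ b ∈ Finset.range (j + 3), T (j + 1) b :=
    aseq_eq_sum _ _ (by omega)
  have h0 : aseq j = ∑ b ∈ Finset.range (j + 2), T j b :=
    aseq_eq_sum _ _ (by omega)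
  rw [h2, h1, h0]
  rw [Finset.sum_range_succ' (fun b => T (j + 2) b) (j + 2),
      Finset.sum_range_succ' (fun b => T (j + 1) b) (j + 2)]
  have hT0 : T (j + 2) 0 = T (j + 1) 0 := by simp [T]
  simp only [term_rec, hT0]
  rw [Finset.sum_add_distrib, Finset.mul_sum]
  ring
end

section
/- The number Î_n of restricted involutions on 2n letters satisfies Î_0 = 1, Î_1 = 3, and the recurrence Î_n = 3·Î_{n−1} + 2(n−1)·Î_{n−2} for all n ≥ 2. -/
/-- A signed permutation on `m` letters, encoded as a pair `(p, ε)` with `p = |π|` a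
permutation of the `m` letters and `ε i = false` meaning that the entry `i` is barred,
is a *signed involution* if `|π|` is an involution and `ε(|π|(i)) = ε(i)` for all `i`. -/
def IsSignedInvolution (m : ℕ) (p : Equiv.Perm (Fin m)) (ε : Fin m → Bool) : Prop :=
  Function.Involutive p ∧ ∀ i, ε (p i) = ε i

/-- A signed permutation `(p, ε)` avoids the pattern `2̄1̄` if there are no `i < j` with
both entries barred and `|π|(i) > |π|(j)`. -/
def AvoidsBarTwoBarOne (m : ℕ) (p : Equiv.Perm (Fin m)) (ε : Fin m → Bool) : Prop :=
  ¬ ∃ i j : Fin m, i < j ∧ ε i = false ∧ ε j = false ∧ p j < p i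

/-- A *restricted involution* on `2n` letters: a signed involution that equals its
reverse complement (via the reflection `Fin.rev : i ↦ 2n+1−i`, the reverse complement
of `(p, ε)` is `(i ↦ rev (p (rev i)), i ↦ ε (rev i))`) and avoids the pattern `2̄1̄`. -/
def IsRestrictedInvolution (n : ℕ) (p : Equiv.Perm (Fin (2 * n))) (ε : Fin (2 * n) → Bool) :
    Prop :=
  IsSignedInvolution (2 * n) p ε ∧
  (∀ i, p (Fin.rev i) = Fin.rev (p i)) ∧
  (∀ i, ε (Fin.rev i) = ε i) ∧
  AvoidsBarTwoBarOne (2 * n) p ε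

/-- `Î_n`, the number of restricted involutions on `2n` letters. -/
noncomputable def Ihat (n : ℕ) : ℕ :=
  Nat.card {q : Equiv.Perm (Fin (2 * n)) × (Fin (2 * n) → Bool) //
    IsRestrictedInvolution n q.1 q.2}


open Function

/-- ℕ-level description of restricted involutions. -/
def RIfun (m : ℕ) (f : Fin m → Fin m) (ε : Fin m → Bool) : Prop :=
  Involutive f ∧ (∀ i, f i.rev = (f i).rev) ∧ (∀ i, ε i.rev = ε i) ∧
    (∀ i, ε i = false → f i = i)

abbrev RI (n : ℕ) :=
  {x : (Fin (2*n) → Fin (2*n)) × (Fin (2*n) → Bool) // RIfun (2*n) x.1 x.2}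

lemma char (n : ℕ) (p : Equiv.Perm (Fin (2*n))) (ε : Fin (2*n) → Bool) :
    IsRestrictedInvolution n p ε ↔ RIfun (2*n) (⇑p) ε := by
  constructor
  · rintro ⟨⟨hinv, hsig⟩, hrev, herev, havd⟩
    refine ⟨hinv, hrev, herev, fun i hi => ?_⟩
    by_contra hne
    rcases lt_or_gt_of_ne (fun h : p i = i => hne h) with h | h
    · exact havd ⟨p i, i, h, by rw [hsig]; exact hi, hi, by rw [hinv]; exact h⟩
    · exact havd ⟨i, p i, h, hi, by rw [hsig]; exact hi, by rw [hinv]; exact h⟩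
  · rintro ⟨hinv, hrev, herev, hfix⟩
    refine ⟨⟨hinv, fun i => ?_⟩, hrev, herev, ?_⟩
    · cases hb : ε i with
      | false => rw [hfix i hb, hb]
      | true =>
        cases hb2 : ε (p i) with
        | true => rfl
        | false =>
          have := hfix _ hb2; rw [hinv] at this
          rw [← this] at hb2; rw [hb] at hb2; simp at hb2
    · rintro ⟨i, j, hij, hi, hj, hlt⟩
      rw [hfix i hi, hfix j hj] at hlt
      exact absurd hij (not_lt.2 hlt.le)

lemma Ihat_eq (n : ℕ) : Ihat n = Nat.card (RI n) := by
  apply Nat.card_eq_of_bijective (fun q => ⟨((⇑q.1.1 : Fin (2*n) → Fin (2*n)), q.1.2),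
    (char n q.1.1 q.1.2).1 q.2⟩)
  constructor
  · rintro ⟨⟨p, ε⟩, hp⟩ ⟨⟨q, δ⟩, hq⟩ h
    simp only [Subtype.mk.injEq, Prod.mk.injEq] at h ⊢
    exact ⟨Equiv.coe_fn_injective h.1, h.2⟩
  · rintro ⟨⟨f, ε⟩, hf⟩
    exact ⟨⟨(hf.1.toPerm, ε), (char n _ _).2 hf⟩, rfl⟩

lemma RI_zero : Nat.card (RI 0) = 1 := by
  rw [Nat.card_eq_one_iff_unique]
  constructor
  · constructor
    rintro ⟨⟨f, ε⟩, _⟩ ⟨⟨g, δ⟩, _⟩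
    ext i <;> exact absurd i.2 (by omega)
  · exact ⟨⟨(id, fun _ => true), ⟨fun x => rfl, fun i => rfl, fun i => rfl,
      fun i _ => rfl⟩⟩⟩

lemma Ihat_zero : Ihat 0 = 1 := by rw [Ihat_eq]; exact RI_zero

instance RIfun.decidable (m : ℕ) (x : (Fin m → Fin m) × (Fin m → Bool)) :
    Decidable (RIfun m x.1 x.2) := by
  unfold RIfun Function.Involutive; infer_instance

instance (n : ℕ) : Fintype (RI n) := Subtype.fintype _

lemma Ihat_one : Ihat 1 = 3 := by
  rw [Ihat_eq]
  rw [Nat.card_eq_fintype_card]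
  decide

/-- totalization of a `Fin`-endofunction to `ℕ`. -/
def fv {m : ℕ} (g : Fin m → Fin m) (x : ℕ) : ℕ :=
  if h : x < m then (g ⟨x, h⟩).val else 0

def ev {m : ℕ} (ε : Fin m → Bool) (x : ℕ) : Bool :=
  if h : x < m then ε ⟨x, h⟩ else true

lemma fv_def {m : ℕ} (g : Fin m → Fin m) (v : ℕ) (h : v < m) :
    fv g v = (g ⟨v, h⟩).val := by unfold fv; rw [dif_pos h]

lemma ev_def {m : ℕ} (ε : Fin m → Bool) (v : ℕ) (h : v < m) :
    ev ε v = ε ⟨v, h⟩ := by unfold ev; rw [dif_pos h]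

lemma fv_eq {m : ℕ} (g : Fin m → Fin m) (x : Fin m) : (g x).val = fv g x.val := by
  rw [fv_def g x.val x.isLt, Fin.eta]

lemma ev_eq {m : ℕ} (ε : Fin m → Bool) (x : Fin m) : ε x = ev ε x.val := by
  rw [ev_def ε x.val x.isLt, Fin.eta]

section extract
variable {k : ℕ} (y : RI k)

lemma RI.flt : ∀ v, v < 2*k → fv y.1.1 v < 2*k := by
  intro v hv; rw [fv_def _ v hv]; exact (y.1.1 ⟨v, hv⟩).isLt

lemma RI.ff : ∀ v, v < 2*k → fv y.1.1 (fv y.1.1 v) = v := by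
  intro v hv
  rw [fv_def _ v hv, ← fv_eq, y.2.1 ⟨v, hv⟩]

lemma RI.frev : ∀ v w, v < 2*k → w = 2*k-1-v → fv y.1.1 w = 2*k-1 - fv y.1.1 v := by
  intro v w hv hw
  have hw' : w < 2*k := by omega
  have h2 : (⟨w, hw'⟩ : Fin (2*k)) = Fin.rev ⟨v, hv⟩ := by
    apply Fin.ext; rw [Fin.val_rev]; simp; omega
  rw [fv_def _ w hw', h2, y.2.2.1 ⟨v, hv⟩, Fin.val_rev, fv_def _ v hv]
  have := (y.1.1 ⟨v, hv⟩).isLt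
  omega

lemma RI.erev : ∀ v w, v < 2*k → w = 2*k-1-v → ev y.1.2 w = ev y.1.2 v := by
  intro v w hv hw
  have hw' : w < 2*k := by omega
  have h2 : (⟨w, hw'⟩ : Fin (2*k)) = Fin.rev ⟨v, hv⟩ := by
    apply Fin.ext; rw [Fin.val_rev]; simp; omega
  rw [ev_def _ w hw', h2, y.2.2.2.1 ⟨v, hv⟩, ev_def _ v hv]

lemma RI.efix : ∀ v, v < 2*k → ev y.1.2 v = false → fv y.1.1 v = v := by
  intro v hv h
  rw [ev_def _ v hv] at h
  rw [fv_def _ v hv, y.2.2.2.2 ⟨v, hv⟩ h]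

end extract

/-- build an element of `RI k` from ℕ-level data. -/
def mkRI (k : ℕ) (F : ℕ → ℕ) (E : ℕ → Bool)
    (h1 : ∀ v, v < 2*k → F v < 2*k)
    (h2 : ∀ v, v < 2*k → F (F v) = v)
    (h3 : ∀ v w, v < 2*k → w = 2*k-1-v → F w = 2*k-1 - F v)
    (h4 : ∀ v w, v < 2*k → w = 2*k-1-v → E w = E v)
    (h5 : ∀ v, v < 2*k → E v = false → F v = v) : RI k := by
  refine ⟨(fun x => ⟨F x.val, h1 _ x.isLt⟩, fun x => E x.val), ?_, ?_, ?_, ?_⟩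
  · intro x; apply Fin.ext; exact h2 x.val x.isLt
  · intro i; apply Fin.ext
    show F (i.rev.val) = (Fin.rev _).val
    rw [Fin.val_rev, Fin.val_rev]
    have := h3 i.val i.rev.val i.isLt (by rw [Fin.val_rev]; omega)
    rw [Fin.val_rev] at this
    have h1' := h1 i.val i.isLt
    simp only [Fin.val_mk] at *
    omega
  · intro i
    show E (i.rev.val) = E i.val
    exact h4 i.val i.rev.val i.isLt (by rw [Fin.val_rev]; omega)
  · intro i hi; apply Fin.ext; exact h5 i.val i.isLt hi

lemma mkRI_fv (k : ℕ) (F : ℕ → ℕ) (E : ℕ → Bool) h1 h2 h3 h4 h5 (v : ℕ) (hv : v < 2*k) :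
    fv (mkRI k F E h1 h2 h3 h4 h5).1.1 v = F v := by
  rw [fv, dif_pos hv]; rfl

lemma mkRI_ev (k : ℕ) (F : ℕ → ℕ) (E : ℕ → Bool) h1 h2 h3 h4 h5 (v : ℕ) (hv : v < 2*k) :
    ev (mkRI k F E h1 h2 h3 h4 h5).1.2 v = E v := by
  rw [ev, dif_pos hv]; rfl

lemma RI.ext {k : ℕ} (y z : RI k)
    (hf : ∀ v, v < 2*k → fv y.1.1 v = fv z.1.1 v)
    (he : ∀ v, v < 2*k → ev y.1.2 v = ev z.1.2 v) : y = z := by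
  apply Subtype.ext
  apply Prod.ext
  · funext x
    apply Fin.ext
    rw [fv_eq, fv_eq]
    exact hf x.val x.isLt
  · funext x
    rw [ev_eq y.1.2 x, ev_eq z.1.2 x]
    exact he x.val x.isLt

section AB
variable (n : ℕ)

lemma RIinterior (x : RI (n+2)) (hx : fv x.1.1 0 = 0 ∨ fv x.1.1 0 = 2*n+3) :
    ∀ v, 1 ≤ v → v ≤ 2*n+2 → 1 ≤ fv x.1.1 v ∧ fv x.1.1 v ≤ 2*n+2 := by
  intro v h1 h2
  have hlt := RI.flt x v (by omega)
  have hrev : fv x.1.1 (2*n+3) = 2*(n+2)-1 - fv x.1.1 0 :=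
    RI.frev x 0 (2*n+3) (by omega) (by omega)
  constructor
  · by_contra h
    have h0 : fv x.1.1 v = 0 := by omega
    have := RI.ff x v (by omega)
    rw [h0] at this
    omega
  · by_contra h
    have h0 : fv x.1.1 v = 2*n+3 := by omega
    have := RI.ff x v (by omega)
    rw [h0] at this
    omega

def stripX (x : RI (n+2)) (hx : fv x.1.1 0 = 0 ∨ fv x.1.1 0 = 2*n+3) : RI (n+1) := by
  refine mkRI (n+1) (fun w => fv x.1.1 (w+1) - 1) (fun w => ev x.1.2 (w+1))
    ?_ ?_ ?_ ?_ ?_ <;> (try simp only [])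
  · intro v hv
    have := RIinterior n x hx (v+1) (by omega) (by omega)
    omega
  · intro v hv
    have hi := RIinterior n x hx (v+1) (by omega) (by omega)
    have e : fv x.1.1 (v+1) - 1 + 1 = fv x.1.1 (v+1) := by omega
    rw [e, RI.ff x (v+1) (by omega)]
    omega
  · intro v w hv hw
    have hi := RIinterior n x hx (v+1) (by omega) (by omega)
    have := RI.frev x (v+1) (w+1) (by omega) (by omega)
    rw [this]
    omega
  · intro v w hv hw
    exact RI.erev x (v+1) (w+1) (by omega) (by omega)
  · intro v hv h
    have := RI.efix x (v+1) (by omega) h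
    omega

/-- the `ℕ`-level function for the inverse construction in cases A/B. -/
def AF (n c : ℕ) (G : ℕ → ℕ) (v : ℕ) : ℕ :=
  if v = 0 then (if c = 2 then 2*n+3 else 0)
  else if v = 2*n+3 then (if c = 2 then 0 else 2*n+3)
  else G (v-1) + 1

def AE (n c : ℕ) (D : ℕ → Bool) (v : ℕ) : Bool :=
  if v = 0 ∨ v = 2*n+3 then (if c = 0 then false else true) else D (v-1)

lemma AF_zero (c : ℕ) (G : ℕ → ℕ) : AF n c G 0 = if c = 2 then 2*n+3 else 0 := by
  unfold AF; rw [if_pos rfl]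

lemma AF_last (c : ℕ) (G : ℕ → ℕ) : AF n c G (2*n+3) = if c = 2 then 0 else 2*n+3 := by
  unfold AF; rw [if_neg (by omega), if_pos rfl]

lemma AF_mid (c : ℕ) (G : ℕ → ℕ) (v : ℕ) (h1 : 1 ≤ v) (h2 : v ≤ 2*n+2) :
    AF n c G v = G (v-1) + 1 := by
  unfold AF; rw [if_neg (by omega), if_neg (by omega)]

lemma AE_end (c : ℕ) (D : ℕ → Bool) (v : ℕ) (h : v = 0 ∨ v = 2*n+3) :
    AE n c D v = if c = 0 then false else true := by
  unfold AE; rw [if_pos h]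

lemma AE_mid (c : ℕ) (D : ℕ → Bool) (v : ℕ) (h1 : 1 ≤ v) (h2 : v ≤ 2*n+2) :
    AE n c D v = D (v-1) := by
  unfold AE; rw [if_neg (by omega)]

def unstripX (c : ℕ) (b : RI (n+1)) : RI (n+2) := by
  refine mkRI (n+2) (AF n c (fv b.1.1)) (AE n c (ev b.1.2)) ?_ ?_ ?_ ?_ ?_ <;> (try simp only [])
  · intro v hv
    by_cases h0 : v = 0
    · subst h0; rw [AF_zero]; split_ifs <;> omega
    by_cases hl : v = 2*n+3
    · subst hl; rw [AF_last]; split_ifs <;> omega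
    · rw [AF_mid n c _ v (by omega) (by omega)]
      have := RI.flt b (v-1) (by omega)
      omega
  · intro v hv
    by_cases h0 : v = 0
    · subst h0; rw [AF_zero]
      by_cases hc : c = 2
      · rw [if_pos hc, AF_last, if_pos hc]
      · rw [if_neg hc, AF_zero, if_neg hc]
    by_cases hl : v = 2*n+3
    · subst hl; rw [AF_last]
      by_cases hc : c = 2
      · rw [if_pos hc, AF_zero, if_pos hc]
      · rw [if_neg hc, AF_last, if_neg hc]
    · rw [AF_mid n c _ v (by omega) (by omega)]
      have hG := RI.flt b (v-1) (by omega)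
      rw [AF_mid n c _ _ (by omega) (by omega)]
      have e : fv b.1.1 (v-1) + 1 - 1 = fv b.1.1 (v-1) := by omega
      rw [e, RI.ff b (v-1) (by omega)]
      omega
  · intro v w hv hw
    by_cases h0 : v = 0
    · subst h0
      have hw' : w = 2*n+3 := by omega
      subst hw'
      rw [AF_zero, AF_last]
      split_ifs <;> omega
    by_cases hl : v = 2*n+3
    · subst hl
      have hw' : w = 0 := by omega
      subst hw'
      rw [AF_zero, AF_last]
      split_ifs <;> omega
    · rw [AF_mid n c _ v (by omega) (by omega), AF_mid n c _ w (by omega) (by omega)]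
      have hG := RI.flt b (v-1) (by omega)
      have := RI.frev b (v-1) (w-1) (by omega) (by omega)
      rw [this]
      omega
  · intro v w hv hw
    by_cases h0 : v = 0
    · subst h0
      rw [AE_end n c _ w (by omega), AE_end n c _ 0 (by omega)]
    by_cases hl : v = 2*n+3
    · subst hl
      rw [AE_end n c _ w (by omega), AE_end n c _ _ (by omega)]
    · rw [AE_mid n c _ v (by omega) (by omega), AE_mid n c _ w (by omega) (by omega)]
      exact RI.erev b (v-1) (w-1) (by omega) (by omega)
  · intro v hv h
    by_cases h0 : v = 0
    · subst h0
      rw [AE_end n c _ 0 (by omega)] at h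
      rw [AF_zero]
      split_ifs with hc
      · rw [if_neg (by omega : ¬ c = 0)] at h; simp at h
      · rfl
    by_cases hl : v = 2*n+3
    · subst hl
      rw [AE_end n c _ _ (by omega)] at h
      rw [AF_last]
      split_ifs with hc
      · rw [if_neg (by omega : ¬ c = 0)] at h; simp at h
      · rfl
    · rw [AE_mid n c _ v (by omega) (by omega)] at h
      rw [AF_mid n c _ v (by omega) (by omega)]
      have := RI.efix b (v-1) (by omega) h
      omega

end AB

section C
variable (n : ℕ)

def eF (k0 k1 i : ℕ) : ℕ := if i+1 < k0 then i+1 else if i+2 < k1 then i+2 else i+3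
def dF (k0 k1 x : ℕ) : ℕ := if x < k0 then x-1 else if x < k1 then x-2 else x-3

def K0 (n k : ℕ) := min k (2*n+3-k)
def K1 (n k : ℕ) := max k (2*n+3-k)

lemma K_facts (k : ℕ) (h1 : 1 ≤ k) (h2 : k ≤ 2*n+2) :
    1 ≤ K0 n k ∧ K0 n k < K1 n k ∧ K0 n k + K1 n k = 2*n+3 ∧
      (k = K0 n k ∨ k = K1 n k) ∧ (2*n+3-k = K0 n k ∨ 2*n+3-k = K1 n k) := by
  unfold K0 K1; omega

variable {k0 k1 : ℕ}

lemma eF_prop (h0 : 1 ≤ k0) (h01 : k0 < k1) (hsum : k0 + k1 = 2*n+3) (i : ℕ) (hi : i < 2*n) :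
    1 ≤ eF k0 k1 i ∧ eF k0 k1 i ≤ 2*n+2 ∧ eF k0 k1 i ≠ k0 ∧ eF k0 k1 i ≠ k1 ∧
      dF k0 k1 (eF k0 k1 i) = i := by
  unfold eF dF; split_ifs <;> omega

lemma dF_prop (h0 : 1 ≤ k0) (h01 : k0 < k1) (hsum : k0 + k1 = 2*n+3) (x : ℕ) (hx1 : 1 ≤ x) (hx2 : x ≤ 2*n+2) (hx3 : x ≠ k0) (hx4 : x ≠ k1) :
    dF k0 k1 x < 2*n ∧ eF k0 k1 (dF k0 k1 x) = x := by
  unfold eF dF; split_ifs <;> omega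

lemma eF_rev (h0 : 1 ≤ k0) (h01 : k0 < k1) (hsum : k0 + k1 = 2*n+3) (i j : ℕ) (hi : i < 2*n) (hj : j = 2*n-1-i) :
    eF k0 k1 j = 2*n+3 - eF k0 k1 i := by
  unfold eF; split_ifs <;> omega

lemma dF_rev (h0 : 1 ≤ k0) (h01 : k0 < k1) (hsum : k0 + k1 = 2*n+3) (x y : ℕ) (hx1 : 1 ≤ x) (hx2 : x ≤ 2*n+2) (hx3 : x ≠ k0) (hx4 : x ≠ k1)
    (hy : y = 2*n+3-x) : dF k0 k1 y = 2*n-1 - dF k0 k1 x := by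
  unfold dF; split_ifs <;> omega

end C

section coreSec

lemma coreValid (n : ℕ) (x : RI (n+2)) (hk1 : 1 ≤ fv x.1.1 0) (hk2 : fv x.1.1 0 ≤ 2*n+2) :
    ∀ v, 1 ≤ v → v ≤ 2*n+2 → v ≠ K0 n (fv x.1.1 0) → v ≠ K1 n (fv x.1.1 0) →
      1 ≤ fv x.1.1 v ∧ fv x.1.1 v ≤ 2*n+2 ∧ fv x.1.1 v ≠ K0 n (fv x.1.1 0) ∧
        fv x.1.1 v ≠ K1 n (fv x.1.1 0) := by
  intro v hv1 hv2 hv3 hv4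
  obtain ⟨hA, hB, hC, hD, hE⟩ := K_facts n (fv x.1.1 0) hk1 hk2
  have hlt := RI.flt x v (by omega)
  have hff := RI.ff x v (by omega)
  have hFk : fv x.1.1 (fv x.1.1 0) = 0 := RI.ff x 0 (by omega)
  have hFlast : fv x.1.1 (2*n+3) = 2*n+3 - fv x.1.1 0 := by
    have := RI.frev x 0 (2*n+3) (by omega) (by omega)
    omega
  have hFrk : fv x.1.1 (2*n+3 - fv x.1.1 0) = 2*n+3 := by
    have := RI.frev x (fv x.1.1 0) (2*n+3 - fv x.1.1 0) (by omega) (by omega)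
    rw [this, hFk]
    omega
  refine ⟨?_, ?_, ?_, ?_⟩
  · by_contra h
    have h0 : fv x.1.1 v = 0 := by omega
    rw [h0] at hff
    omega
  · by_contra h
    have h0 : fv x.1.1 v = 2*n+3 := by omega
    rw [h0, hFlast] at hff
    omega
  · intro h
    have hk : fv x.1.1 v = fv x.1.1 0 ∨ fv x.1.1 v = 2*n+3 - fv x.1.1 0 := by omega
    rcases hk with hk | hk
    · rw [hk, hFk] at hff; omega
    · rw [hk, hFrk] at hff; omega
  · intro h
    have hk : fv x.1.1 v = fv x.1.1 0 ∨ fv x.1.1 v = 2*n+3 - fv x.1.1 0 := by omega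
    rcases hk with hk | hk
    · rw [hk, hFk] at hff; omega
    · rw [hk, hFrk] at hff; omega

def coreX (n : ℕ) (x : RI (n+2)) (hk1 : 1 ≤ fv x.1.1 0) (hk2 : fv x.1.1 0 ≤ 2*n+2) :
    RI n := by
  refine mkRI n
    (fun j => dF (K0 n (fv x.1.1 0)) (K1 n (fv x.1.1 0))
      (fv x.1.1 (eF (K0 n (fv x.1.1 0)) (K1 n (fv x.1.1 0)) j)))
    (fun j => ev x.1.2 (eF (K0 n (fv x.1.1 0)) (K1 n (fv x.1.1 0)) j))
    ?_ ?_ ?_ ?_ ?_ <;> (try simp only []) <;>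
    obtain ⟨hA, hB, hC, hD, hE⟩ := K_facts n (fv x.1.1 0) hk1 hk2
  · intro v hv
    obtain ⟨he1, he2, he3, he4, he5⟩ := eF_prop n hA hB hC v hv
    obtain ⟨hc1, hc2, hc3, hc4⟩ := coreValid n x hk1 hk2 _ he1 he2 he3 he4
    exact (dF_prop n hA hB hC _ hc1 hc2 hc3 hc4).1
  · intro v hv
    obtain ⟨he1, he2, he3, he4, he5⟩ := eF_prop n hA hB hC v hv
    obtain ⟨hc1, hc2, hc3, hc4⟩ := coreValid n x hk1 hk2 _ he1 he2 he3 he4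
    rw [(dF_prop n hA hB hC _ hc1 hc2 hc3 hc4).2,
      RI.ff x _ (by omega), he5]
  · intro v w hv hw
    obtain ⟨he1, he2, he3, he4, he5⟩ := eF_prop n hA hB hC v hv
    obtain ⟨hc1, hc2, hc3, hc4⟩ := coreValid n x hk1 hk2 _ he1 he2 he3 he4
    rw [eF_rev n hA hB hC v w hv hw,
      RI.frev x (eF (K0 n (fv x.1.1 0)) (K1 n (fv x.1.1 0)) v)
        (2*n+3 - eF (K0 n (fv x.1.1 0)) (K1 n (fv x.1.1 0)) v) (by omega) (by omega)]
    have : 2*(n+2)-1 - fv x.1.1 (eF (K0 n (fv x.1.1 0)) (K1 n (fv x.1.1 0)) v) =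
        2*n+3 - fv x.1.1 (eF (K0 n (fv x.1.1 0)) (K1 n (fv x.1.1 0)) v) := by omega
    rw [this, dF_rev n hA hB hC _ _ hc1 hc2 hc3 hc4 rfl]
  · intro v w hv hw
    rw [eF_rev n hA hB hC v w hv hw]
    obtain ⟨he1, he2, he3, he4, he5⟩ := eF_prop n hA hB hC v hv
    exact RI.erev x _ _ (by omega : eF (K0 n (fv x.1.1 0)) (K1 n (fv x.1.1 0)) v < 2*(n+2))
      (by omega)
  · intro v hv h
    obtain ⟨he1, he2, he3, he4, he5⟩ := eF_prop n hA hB hC v hv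
    rw [RI.efix x _ (by omega) h, he5]

end coreSec

def CF (n k : ℕ) (G : ℕ → ℕ) (v : ℕ) : ℕ :=
  if v = 0 then k else if v = k then 0 else if v = 2*n+3-k then 2*n+3
  else if v = 2*n+3 then 2*n+3-k
  else eF (K0 n k) (K1 n k) (G (dF (K0 n k) (K1 n k) v))

def CE (n k : ℕ) (D : ℕ → Bool) (v : ℕ) : Bool :=
  if v = 0 ∨ v = k ∨ v = 2*n+3-k ∨ v = 2*n+3 then true
  else D (dF (K0 n k) (K1 n k) v)

lemma CF_zero (n k : ℕ) (G : ℕ → ℕ) : CF n k G 0 = k := by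
  unfold CF; rw [if_pos rfl]

lemma CF_k (n k : ℕ) (hc1 : 1 ≤ k) (G : ℕ → ℕ) : CF n k G k = 0 := by
  unfold CF; rw [if_neg (by omega), if_pos rfl]

lemma CF_rk (n k : ℕ) (hc1 : 1 ≤ k) (hc2 : k ≤ 2*n+2) (G : ℕ → ℕ) :
    CF n k G (2*n+3-k) = 2*n+3 := by
  unfold CF; rw [if_neg (by omega), if_neg (by omega), if_pos rfl]

lemma CF_last (n k : ℕ) (hc1 : 1 ≤ k) (hc2 : k ≤ 2*n+2) (G : ℕ → ℕ) :
    CF n k G (2*n+3) = 2*n+3-k := by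
  unfold CF; rw [if_neg (by omega), if_neg (by omega), if_neg (by omega), if_pos rfl]

lemma CF_mid (n k : ℕ) (G : ℕ → ℕ) (v : ℕ) (h1 : 1 ≤ v) (h2 : v ≤ 2*n+2) (h3 : v ≠ k)
    (h4 : v ≠ 2*n+3-k) :
    CF n k G v = eF (K0 n k) (K1 n k) (G (dF (K0 n k) (K1 n k) v)) := by
  unfold CF; rw [if_neg (by omega), if_neg h3, if_neg h4, if_neg (by omega)]

lemma CE_end (n k : ℕ) (D : ℕ → Bool) (v : ℕ)
    (h : v = 0 ∨ v = k ∨ v = 2*n+3-k ∨ v = 2*n+3) : CE n k D v = true := by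
  unfold CE; rw [if_pos h]

lemma CE_mid (n k : ℕ) (D : ℕ → Bool) (v : ℕ) (h1 : 1 ≤ v) (h2 : v ≤ 2*n+2) (h3 : v ≠ k)
    (h4 : v ≠ 2*n+3-k) : CE n k D v = D (dF (K0 n k) (K1 n k) v) := by
  unfold CE; rw [if_neg (by omega)]

lemma uncore_hval (n k : ℕ) (hc1 : 1 ≤ k) (hc2 : k ≤ 2*n+2) :
    ∀ v, 1 ≤ v → v ≤ 2*n+2 → v ≠ k → v ≠ 2*n+3-k →
      (dF (K0 n k) (K1 n k) v < 2*n ∧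
        eF (K0 n k) (K1 n k) (dF (K0 n k) (K1 n k) v) = v) := by
  obtain ⟨hA, hB, hC, hD, hE⟩ := K_facts n k hc1 hc2
  intro v h1 h2 h3 h4
  exact dF_prop n hA hB hC v h1 h2 (by omega) (by omega)

lemma uncore_hmid (n k : ℕ) (hc1 : 1 ≤ k) (hc2 : k ≤ 2*n+2) (b : RI n) :
    ∀ v, 1 ≤ v → v ≤ 2*n+2 → v ≠ k → v ≠ 2*n+3-k →
      (1 ≤ CF n k (fv b.1.1) v ∧ CF n k (fv b.1.1) v ≤ 2*n+2 ∧
       CF n k (fv b.1.1) v ≠ k ∧ CF n k (fv b.1.1) v ≠ 2*n+3-k) := by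
  obtain ⟨hA, hB, hC, hD, hE⟩ := K_facts n k hc1 hc2
  intro v h1 h2 h3 h4
  rw [CF_mid n k _ v h1 h2 h3 h4]
  have hd := uncore_hval n k hc1 hc2 v h1 h2 h3 h4
  have hG := RI.flt b (dF (K0 n k) (K1 n k) v) (by omega)
  obtain ⟨g1, g2, g3, g4, g5⟩ := eF_prop n hA hB hC
    (fv b.1.1 (dF (K0 n k) (K1 n k) v)) (by omega)
  exact ⟨g1, g2, by omega, by omega⟩

def uncoreX (n k : ℕ) (hc1 : 1 ≤ k) (hc2 : k ≤ 2*n+2) (b : RI n) : RI (n+2) := by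
  refine mkRI (n+2) (CF n k (fv b.1.1)) (CE n k (ev b.1.2)) ?_ ?_ ?_ ?_ ?_ <;>
    obtain ⟨hA, hB, hC, hD, hE⟩ := K_facts n k hc1 hc2 <;>
    have hval := uncore_hval n k hc1 hc2 <;>
    have hmid := uncore_hmid n k hc1 hc2 b
  · intro v hv
    by_cases h0 : v = 0
    · rw [h0, CF_zero]; omega
    by_cases hk : v = k
    · rw [hk, CF_k n k hc1]; omega
    by_cases hrk : v = 2*n+3-k
    · rw [hrk, CF_rk n k hc1 hc2]; omega
    by_cases hl : v = 2*n+3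
    · rw [hl, CF_last n k hc1 hc2]; omega
    · have := hmid v (by omega) (by omega) hk hrk
      omega
  · intro v hv
    by_cases h0 : v = 0
    · rw [h0, CF_zero, CF_k n k hc1]
    by_cases hk : v = k
    · rw [hk, CF_k n k hc1, CF_zero]
    by_cases hrk : v = 2*n+3-k
    · rw [hrk, CF_rk n k hc1 hc2, CF_last n k hc1 hc2]
    by_cases hl : v = 2*n+3
    · rw [hl, CF_last n k hc1 hc2, CF_rk n k hc1 hc2]
    · have hd := hval v (by omega) (by omega) hk hrk
      have hG := RI.flt b (dF (K0 n k) (K1 n k) v) (by omega)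
      obtain ⟨g1, g2, g3, g4, g5⟩ := eF_prop n hA hB hC
        (fv b.1.1 (dF (K0 n k) (K1 n k) v)) (by omega)
      rw [CF_mid n k _ v (by omega) (by omega) hk hrk,
        CF_mid n k _ _ g1 g2 (by omega) (by omega), g5,
        RI.ff b (dF (K0 n k) (K1 n k) v) (by omega), hd.2]
  · intro v w hv hw
    have hw' : w = 2*n+3-v := by omega
    by_cases h0 : v = 0
    · rw [h0, CF_zero]; rw [h0] at hw'
      rw [hw', (by omega : 2*n+3-0 = 2*n+3), CF_last n k hc1 hc2]; omega
    by_cases hk : v = k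
    · rw [hk, CF_k n k hc1]; rw [hk] at hw'
      rw [hw', CF_rk n k hc1 hc2]; omega
    by_cases hrk : v = 2*n+3-k
    · rw [hrk, CF_rk n k hc1 hc2]; rw [hrk] at hw'
      rw [hw', (by omega : 2*n+3-(2*n+3-k) = k), CF_k n k hc1]; omega
    by_cases hl : v = 2*n+3
    · rw [hl, CF_last n k hc1 hc2]; rw [hl] at hw'
      rw [hw', (by omega : 2*n+3-(2*n+3) = 0), CF_zero]; omega
    · have hd := hval v (by omega) (by omega) hk hrk
      rw [CF_mid n k _ v (by omega) (by omega) hk hrk,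
        CF_mid n k _ w (by omega) (by omega) (by omega) (by omega)]
      have hG := RI.flt b (dF (K0 n k) (K1 n k) v) (by omega)
      rw [dF_rev n hA hB hC v w (by omega) (by omega) (by omega) (by omega) hw',
        RI.frev b (dF (K0 n k) (K1 n k) v) _ (by omega) rfl,
        eF_rev n hA hB hC (fv b.1.1 (dF (K0 n k) (K1 n k) v)) _ (by omega) rfl]
      obtain ⟨g1, g2, g3, g4, g5⟩ := eF_prop n hA hB hC
        (fv b.1.1 (dF (K0 n k) (K1 n k) v)) (by omega)
      omega
  · intro v w hv hw
    have hw' : w = 2*n+3-v := by omega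
    by_cases h0 : v = 0
    · rw [CE_end n k _ v (by omega), CE_end n k _ w (by omega)]
    by_cases hk : v = k
    · rw [CE_end n k _ v (by omega), CE_end n k _ w (by omega)]
    by_cases hrk : v = 2*n+3-k
    · rw [CE_end n k _ v (by omega), CE_end n k _ w (by omega)]
    by_cases hl : v = 2*n+3
    · rw [CE_end n k _ v (by omega), CE_end n k _ w (by omega)]
    · have hd := hval v (by omega) (by omega) hk hrk
      rw [CE_mid n k _ v (by omega) (by omega) hk hrk,
        CE_mid n k _ w (by omega) (by omega) (by omega) (by omega),
        dF_rev n hA hB hC v w (by omega) (by omega) (by omega) (by omega) hw']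
      exact RI.erev b (dF (K0 n k) (K1 n k) v) _ (by omega) rfl
  · intro v hv h
    by_cases hend : v = 0 ∨ v = k ∨ v = 2*n+3-k ∨ v = 2*n+3
    · rw [CE_end n k _ v hend] at h; simp at h
    · push_neg at hend
      obtain ⟨e0, ek, erk, el⟩ := hend
      have hd := hval v (by omega) (by omega) ek erk
      rw [CE_mid n k _ v (by omega) (by omega) ek erk] at h
      rw [CF_mid n k _ v (by omega) (by omega) ek erk,
        RI.efix b (dF (K0 n k) (K1 n k) v) (by omega) h, hd.2]

lemma stripX_fv (n : ℕ) (x : RI (n+2)) (hx) (w : ℕ) (hw : w < 2*(n+1)) :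
    fv (stripX n x hx).1.1 w = fv x.1.1 (w+1) - 1 :=
  mkRI_fv _ _ _ _ _ _ _ _ w hw

lemma stripX_ev (n : ℕ) (x : RI (n+2)) (hx) (w : ℕ) (hw : w < 2*(n+1)) :
    ev (stripX n x hx).1.2 w = ev x.1.2 (w+1) :=
  mkRI_ev _ _ _ _ _ _ _ _ w hw

lemma unstripX_fv (n c : ℕ) (b : RI (n+1)) (v : ℕ) (hv : v < 2*(n+2)) :
    fv (unstripX n c b).1.1 v = AF n c (fv b.1.1) v :=
  mkRI_fv _ _ _ _ _ _ _ _ v hv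

lemma unstripX_ev (n c : ℕ) (b : RI (n+1)) (v : ℕ) (hv : v < 2*(n+2)) :
    ev (unstripX n c b).1.2 v = AE n c (ev b.1.2) v :=
  mkRI_ev _ _ _ _ _ _ _ _ v hv

lemma coreX_fv (n : ℕ) (x : RI (n+2)) (hk1) (hk2) (w : ℕ) (hw : w < 2*n) :
    fv (coreX n x hk1 hk2).1.1 w =
      dF (K0 n (fv x.1.1 0)) (K1 n (fv x.1.1 0))
        (fv x.1.1 (eF (K0 n (fv x.1.1 0)) (K1 n (fv x.1.1 0)) w)) :=
  mkRI_fv _ _ _ _ _ _ _ _ w hw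

lemma coreX_ev (n : ℕ) (x : RI (n+2)) (hk1) (hk2) (w : ℕ) (hw : w < 2*n) :
    ev (coreX n x hk1 hk2).1.2 w =
      ev x.1.2 (eF (K0 n (fv x.1.1 0)) (K1 n (fv x.1.1 0)) w) :=
  mkRI_ev _ _ _ _ _ _ _ _ w hw

lemma uncoreX_fv (n k : ℕ) (hc1) (hc2) (b : RI n) (v : ℕ) (hv : v < 2*(n+2)) :
    fv (uncoreX n k hc1 hc2 b).1.1 v = CF n k (fv b.1.1) v :=
  mkRI_fv _ _ _ _ _ _ _ _ v hv

lemma uncoreX_ev (n k : ℕ) (hc1) (hc2) (b : RI n) (v : ℕ) (hv : v < 2*(n+2)) :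
    ev (uncoreX n k hc1 hc2 b).1.2 v = CE n k (ev b.1.2) v :=
  mkRI_ev _ _ _ _ _ _ _ _ v hv

def toSum (n : ℕ) (x : RI (n+2)) : (Fin 3 × RI (n+1)) ⊕ (Fin (2*n+2) × RI n) :=
  if h0 : fv x.1.1 0 = 0 then
    .inl (⟨if ev x.1.2 0 = true then 1 else 0, by split_ifs <;> omega⟩,
      stripX n x (Or.inl h0))
  else if h1 : fv x.1.1 0 = 2*n+3 then .inl (⟨2, by omega⟩, stripX n x (Or.inr h1))
  else .inr (⟨fv x.1.1 0 - 1, by have := RI.flt x 0 (by omega); omega⟩,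
    coreX n x (by omega) (by have := RI.flt x 0 (by omega); omega))

def ofSum (n : ℕ) : (Fin 3 × RI (n+1)) ⊕ (Fin (2*n+2) × RI n) → RI (n+2)
  | .inl (c, b) => unstripX n c.val b
  | .inr (k', b) => uncoreX n (k'.val+1) (by omega) (by have := k'.isLt; omega) b

lemma left_invA (n : ℕ) (x : RI (n+2)) (hx0 : fv x.1.1 0 = 0) (c : ℕ)
    (hc : (c = 0 ∧ ev x.1.2 0 = false) ∨ (c = 1 ∧ ev x.1.2 0 = true)) :
    unstripX n c (stripX n x (Or.inl hx0)) = x := by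
  apply RI.ext
  · intro v hv
    rw [unstripX_fv n c _ v hv]
    by_cases hv0 : v = 0
    · rw [hv0, AF_zero, if_neg (by omega), hx0]
    by_cases hvl : v = 2*n+3
    · rw [hvl, AF_last, if_neg (by omega)]
      have := RI.frev x 0 (2*n+3) (by omega) (by omega)
      rw [this, hx0]
      omega
    · rw [AF_mid n c _ v (by omega) (by omega),
        stripX_fv n x _ (v-1) (by omega), (by omega : v - 1 + 1 = v)]
      have := RIinterior n x (Or.inl hx0) v (by omega) (by omega)
      omega
  · intro v hv
    rw [unstripX_ev n c _ v hv]
    by_cases hv0 : v = 0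
    · rw [hv0, AE_end n c _ 0 (by omega)]
      rcases hc with ⟨hc, he⟩ | ⟨hc, he⟩
      · rw [if_pos hc, he]
      · rw [if_neg (by omega), he]
    by_cases hvl : v = 2*n+3
    · rw [hvl, AE_end n c _ _ (by omega),
        RI.erev x 0 (2*n+3) (by omega) (by omega)]
      rcases hc with ⟨hc, he⟩ | ⟨hc, he⟩
      · rw [if_pos hc, he]
      · rw [if_neg (by omega), he]
    · rw [AE_mid n c _ v (by omega) (by omega),
        stripX_ev n x _ (v-1) (by omega), (by omega : v - 1 + 1 = v)]

lemma left_invB (n : ℕ) (x : RI (n+2)) (hx0 : fv x.1.1 0 = 2*n+3) :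
    unstripX n 2 (stripX n x (Or.inr hx0)) = x := by
  apply RI.ext
  · intro v hv
    rw [unstripX_fv n 2 _ v hv]
    by_cases hv0 : v = 0
    · rw [hv0, AF_zero, if_pos rfl, hx0]
    by_cases hvl : v = 2*n+3
    · rw [hvl, AF_last, if_pos rfl]
      have := RI.frev x 0 (2*n+3) (by omega) (by omega)
      rw [this, hx0]
      omega
    · rw [AF_mid n 2 _ v (by omega) (by omega),
        stripX_fv n x _ (v-1) (by omega), (by omega : v - 1 + 1 = v)]
      have := RIinterior n x (Or.inr hx0) v (by omega) (by omega)
      omega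
  · intro v hv
    rw [unstripX_ev n 2 _ v hv]
    have he0 : ev x.1.2 0 = true := by
      cases he : ev x.1.2 0
      · have := RI.efix x 0 (by omega) he
        omega
      · rfl
    by_cases hv0 : v = 0
    · rw [hv0, AE_end n 2 _ 0 (by omega), if_neg (by omega), he0]
    by_cases hvl : v = 2*n+3
    · rw [hvl, AE_end n 2 _ _ (by omega),
        RI.erev x 0 (2*n+3) (by omega) (by omega), if_neg (by omega), he0]
    · rw [AE_mid n 2 _ v (by omega) (by omega),
        stripX_ev n x _ (v-1) (by omega), (by omega : v - 1 + 1 = v)]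

lemma left_invC (n : ℕ) (x : RI (n+2)) (k : ℕ) (hk : k = fv x.1.1 0)
    (hc1 : 1 ≤ k) (hc2 : k ≤ 2*n+2) (hk1 : 1 ≤ fv x.1.1 0) (hk2 : fv x.1.1 0 ≤ 2*n+2) :
    uncoreX n k hc1 hc2 (coreX n x hk1 hk2) = x := by
  subst hk
  obtain ⟨hA, hB, hC, hD, hE⟩ := K_facts n (fv x.1.1 0) hk1 hk2
  have hkf : fv x.1.1 (fv x.1.1 0) = 0 := RI.ff x 0 (by omega)
  have hlast : fv x.1.1 (2*n+3) = 2*(n+2)-1 - fv x.1.1 0 :=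
    RI.frev x 0 (2*n+3) (by omega) (by omega)
  have hrk : fv x.1.1 (2*n+3 - fv x.1.1 0) = 2*n+3 := by
    have := RI.frev x (fv x.1.1 0) (2*n+3 - fv x.1.1 0) (by omega) (by omega)
    rw [this, hkf]
    omega
  apply RI.ext
  · intro v hv
    rw [uncoreX_fv n _ _ _ _ v hv]
    by_cases hv0 : v = 0
    · rw [hv0, CF_zero]
    by_cases hvk : v = fv x.1.1 0
    · rw [hvk, CF_k n _ hc1, hkf]
    by_cases hvrk : v = 2*n+3 - fv x.1.1 0
    · rw [hvrk, CF_rk n _ hc1 hc2, hrk]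
    by_cases hvl : v = 2*n+3
    · rw [hvl, CF_last n _ hc1 hc2, hlast]
      omega
    · rw [CF_mid n _ _ v (by omega) (by omega) hvk hvrk]
      obtain ⟨hd1, hd2⟩ := dF_prop n hA hB hC v (by omega) (by omega) (by omega) (by omega)
      rw [coreX_fv n x hk1 hk2 _ hd1, hd2]
      obtain ⟨hc1', hc2', hc3', hc4'⟩ := coreValid n x hk1 hk2 v (by omega) (by omega)
        (by omega) (by omega)
      exact (dF_prop n hA hB hC (fv x.1.1 v) hc1' hc2' hc3' hc4').2
  · intro v hv
    rw [uncoreX_ev n _ _ _ _ v hv]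
    have he0 : ev x.1.2 0 = true := by
      cases he : ev x.1.2 0
      · have := RI.efix x 0 (by omega) he
        omega
      · rfl
    by_cases hv0 : v = 0
    · rw [hv0, CE_end n _ _ 0 (by omega), he0]
    by_cases hvk : v = fv x.1.1 0
    · rw [CE_end n _ _ v (by omega)]
      cases he : ev x.1.2 v
      · have := RI.efix x v (by omega) he
        rw [hvk, hkf] at this
        omega
      · rfl
    by_cases hvrk : v = 2*n+3 - fv x.1.1 0
    · rw [CE_end n _ _ v (by omega)]
      cases he : ev x.1.2 v
      · have := RI.efix x v (by omega) he
        rw [hvrk, hrk] at this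
        omega
      · rfl
    by_cases hvl : v = 2*n+3
    · rw [hvl, CE_end n _ _ _ (by omega),
        RI.erev x 0 (2*n+3) (by omega) (by omega), he0]
    · rw [CE_mid n _ _ v (by omega) (by omega) hvk hvrk]
      obtain ⟨hd1, hd2⟩ := dF_prop n hA hB hC v (by omega) (by omega) (by omega) (by omega)
      rw [coreX_ev n x hk1 hk2 _ hd1, hd2]

lemma strip_unstrip (n c : ℕ) (b : RI (n+1)) (hx) :
    stripX n (unstripX n c b) hx = b := by
  apply RI.ext
  · intro w hw
    rw [stripX_fv n _ _ w hw, unstripX_fv n c b (w+1) (by omega),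
      AF_mid n c _ (w+1) (by omega) (by omega), (by omega : w + 1 - 1 = w)]
    have := RI.flt b w (by omega)
    omega
  · intro w hw
    rw [stripX_ev n _ _ w hw, unstripX_ev n c b (w+1) (by omega),
      AE_mid n c _ (w+1) (by omega) (by omega), (by omega : w + 1 - 1 = w)]

lemma core_uncore (n k : ℕ) (hc1 : 1 ≤ k) (hc2 : k ≤ 2*n+2) (b : RI n) (hk1 hk2) :
    coreX n (uncoreX n k hc1 hc2 b) hk1 hk2 = b := by
  obtain ⟨hA, hB, hC, hD, hE⟩ := K_facts n k hc1 hc2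
  have hF0 : fv (uncoreX n k hc1 hc2 b).1.1 0 = k := by
    rw [uncoreX_fv n k hc1 hc2 b 0 (by omega), CF_zero]
  apply RI.ext
  · intro w hw
    rw [coreX_fv n _ hk1 hk2 w hw, hF0]
    obtain ⟨g1, g2, g3, g4, g5⟩ := eF_prop n hA hB hC w hw
    rw [uncoreX_fv n k hc1 hc2 b _ (by omega),
      CF_mid n k _ _ g1 g2 (by omega) (by omega), g5]
    have hG := RI.flt b w hw
    obtain ⟨p1, p2, p3, p4, p5⟩ := eF_prop n hA hB hC (fv b.1.1 w) (by omega)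
    exact p5
  · intro w hw
    rw [coreX_ev n _ hk1 hk2 w hw, hF0]
    obtain ⟨g1, g2, g3, g4, g5⟩ := eF_prop n hA hB hC w hw
    rw [uncoreX_ev n k hc1 hc2 b _ (by omega),
      CE_mid n k _ _ g1 g2 (by omega) (by omega), g5]

lemma leftInv (n : ℕ) (x : RI (n+2)) : ofSum n (toSum n x) = x := by
  by_cases h0 : fv x.1.1 0 = 0
  · cases he : ev x.1.2 0
    · have ht : toSum n x = .inl (⟨0, by omega⟩, stripX n x (Or.inl h0)) := by
        simp [toSum, dif_pos h0, he]
      rw [ht]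
      exact left_invA n x h0 0 (Or.inl ⟨rfl, he⟩)
    · have ht : toSum n x = .inl (⟨1, by omega⟩, stripX n x (Or.inl h0)) := by
        simp [toSum, dif_pos h0, he]
      rw [ht]
      exact left_invA n x h0 1 (Or.inr ⟨rfl, he⟩)
  · by_cases h1 : fv x.1.1 0 = 2*n+3
    · have ht : toSum n x = .inl (⟨2, by omega⟩, stripX n x (Or.inr h1)) := by
        simp only [toSum, dif_neg h0, dif_pos h1]
      rw [ht]
      exact left_invB n x h1
    · have hlt := RI.flt x 0 (by omega)
      have ht : toSum n x = .inr (⟨fv x.1.1 0 - 1, by omega⟩,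
          coreX n x (by omega) (by omega)) := by
        simp only [toSum, dif_neg h0, dif_neg h1]
      rw [ht]
      exact left_invC n x (fv x.1.1 0 - 1 + 1) (by omega) (by omega) (by omega)
        (by omega) (by omega)

lemma rightInv (n : ℕ) (s : (Fin 3 × RI (n+1)) ⊕ (Fin (2*n+2) × RI n)) :
    toSum n (ofSum n s) = s := by
  rcases s with ⟨c, b⟩ | ⟨k', b⟩
  · show toSum n (unstripX n c.val b) = _
    have hF0 : fv (unstripX n c.val b).1.1 0 = if c.val = 2 then 2*n+3 else 0 := by
      rw [unstripX_fv n c.val b 0 (by omega), AF_zero]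
    have hE0 : ev (unstripX n c.val b).1.2 0 = (if c.val = 0 then false else true) := by
      rw [unstripX_ev n c.val b 0 (by omega), AE_end n _ _ 0 (by omega)]
    by_cases hc2 : c.val = 2
    · rw [if_pos hc2] at hF0
      simp only [toSum, dif_neg (by omega : ¬ fv (unstripX n c.val b).1.1 0 = 0),
        dif_pos hF0, Sum.inl.injEq, Prod.mk.injEq]
      exact ⟨Fin.ext (by simpa using hc2.symm), strip_unstrip n c.val b _⟩
    · rw [if_neg hc2] at hF0
      by_cases hc0 : c.val = 0
      · rw [if_pos hc0] at hE0
        simp only [toSum, dif_pos hF0, hE0, Sum.inl.injEq, Prod.mk.injEq]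
        constructor
        · apply Fin.ext; simpa using hc0.symm
        · exact strip_unstrip n c.val b _
      · have hc1 : c.val = 1 := by have := c.isLt; omega
        rw [if_neg hc0] at hE0
        simp only [toSum, dif_pos hF0, hE0, Sum.inl.injEq, Prod.mk.injEq]
        constructor
        · apply Fin.ext; simpa using hc1.symm
        · exact strip_unstrip n c.val b _
  · show toSum n (uncoreX n (k'.val+1) (by omega) (by have := k'.isLt; omega) b) = _
    have hF0 : fv (uncoreX n (k'.val+1) (by omega) (by have := k'.isLt; omega) b).1.1 0
        = k'.val+1 := by
      rw [uncoreX_fv n _ _ _ b 0 (by omega), CF_zero]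
    have hk' := k'.isLt
    simp only [toSum, dif_neg (by omega : ¬ fv (uncoreX n (k'.val+1) (by omega)
        (by have := k'.isLt; omega) b).1.1 0 = 0),
      dif_neg (by omega : ¬ fv (uncoreX n (k'.val+1) (by omega)
        (by have := k'.isLt; omega) b).1.1 0 = 2*n+3),
      Sum.inr.injEq, Prod.mk.injEq]
    constructor
    · apply Fin.ext; simp [hF0]
    · exact core_uncore n (k'.val+1) (by omega) (by omega) b _ _

lemma card_step (n : ℕ) :
    Nat.card (RI (n+2)) = 3 * Nat.card (RI (n+1)) + (2*n+2) * Nat.card (RI n) := by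
  have E : RI (n+2) ≃ (Fin 3 × RI (n+1)) ⊕ (Fin (2*n+2) × RI n) :=
    ⟨toSum n, ofSum n, leftInv n, rightInv n⟩
  rw [Nat.card_congr E, Nat.card_sum, Nat.card_prod, Nat.card_prod]
  simp [Nat.card_eq_fintype_card]

/-- `Î_0 = 1`, `Î_1 = 3`, and `Î_n = 3·Î_{n−1} + 2(n−1)·Î_{n−2}` for `n ≥ 2`. -/
theorem stmt5 :
    Ihat 0 = 1 ∧ Ihat 1 = 3 ∧
    ∀ n : ℕ, 2 ≤ n → Ihat n = 3 * Ihat (n - 1) + 2 * (n - 1) * Ihat (n - 2) := by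
  refine ⟨Ihat_zero, Ihat_one, ?_⟩
  intro n hn
  obtain ⟨m, rfl⟩ : ∃ m, n = m + 2 := ⟨n - 2, by omega⟩
  rw [Ihat_eq, Ihat_eq, Ihat_eq, card_step]
  have h1 : m + 2 - 1 = m + 1 := by omega
  have h2 : m + 2 - 2 = m := by omega
  rw [h1, h2]
  ring
end

section
/- There is a bijection between the set of restricted involutions on 2n letters and the set of skew-symmetric (n,n)-clans; in particular the number of restricted involutions on 2n letters equals Z_n, the number of skew-symmetric (n,n)-clans. -/
lemma rev_ne_self {n : ℕ} (i : Fin (2 * n)) : Fin.rev i ≠ i := by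
  intro h
  have h1 : (Fin.rev i).val = i.val := congrArg Fin.val h
  have h2 := i.isLt
  simp only [Fin.val_rev] at h1
  omega

/-- The sign transformation used in the bijection. -/
def flipS (n : ℕ) (σ : Equiv.Perm (Fin (2 * n))) (f : Fin (2 * n) → Bool) :
    Fin (2 * n) → Bool :=
  fun i => if σ i = i then (if i < Fin.rev i then f i else !(f i)) else true

lemma flipS_flipS {n : ℕ} (σ : Equiv.Perm (Fin (2 * n))) (f : Fin (2 * n) → Bool)
    (hf : ∀ i, σ i ≠ i → f i = true) : flipS n σ (flipS n σ f) = f := by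
  funext i
  by_cases h : σ i = i
  · by_cases hlt : i < Fin.rev i <;> simp [flipS, h, hlt]
  · simp [flipS, h, hf i h]

lemma restricted_true {n : ℕ} {p : Equiv.Perm (Fin (2 * n))} {ε : Fin (2 * n) → Bool}
    (h : IsRestrictedInvolution n p ε) {i : Fin (2 * n)} (hi : p i ≠ i) : ε i = true := by
  by_contra hε
  have hε' : ε i = false := by simpa using hε
  have hpε : ε (p i) = false := by rw [h.1.2 i, hε']
  have hpp : p (p i) = i := h.1.1 i
  rcases lt_or_gt_of_ne (Ne.symm hi) with hlt | hlt
  · exact h.2.2.2 ⟨i, p i, hlt, hε', hpε, by rw [hpp]; exact hlt⟩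
  · exact h.2.2.2 ⟨p i, i, hlt, hpε, hε', by rw [hpp]; exact hlt⟩

lemma skew_of_restricted {n : ℕ} {p : Equiv.Perm (Fin (2 * n))} {ε : Fin (2 * n) → Bool}
    (h : IsRestrictedInvolution n p ε) : IsSkewClan n p (flipS n p ε) := by
  obtain ⟨⟨hinv, hpe⟩, hcomm, hrev, _⟩ := h
  have hfix : ∀ i : Fin (2 * n), p i = i → p (Fin.rev i) = Fin.rev i := by
    intro i hi; rw [hcomm, hi]
  have hflip : ∀ i, p i = i → flipS n p ε (Fin.rev i) = !(flipS n p ε i) := by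
    intro i hi
    have hri := hfix i hi
    rcases lt_or_gt_of_ne (rev_ne_self i) with hlt | hlt
    · have : ¬ i < Fin.rev i := by simpa using le_of_lt hlt
      have h2 : Fin.rev i < Fin.rev (Fin.rev i) := by rwa [Fin.rev_rev]
      simp [flipS, hi, hri, this, h2, hlt, hrev i]
    · have h2 : ¬ Fin.rev i < Fin.rev (Fin.rev i) := by
        rw [Fin.rev_rev]; simpa using le_of_lt hlt
      simp [flipS, hi, hri, hlt, lt_asymm hlt, h2, hrev i]
  refine ⟨hinv, fun i hi => by simp [flipS, hi], ?_, hcomm, hflip⟩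
  apply Finset.card_bij' (fun i _ => Fin.rev i) (fun i _ => Fin.rev i)
  · intro a ha
    simp only [Finset.mem_filter, Finset.mem_univ, true_and] at ha ⊢
    exact ⟨hfix a ha.1, by rw [hflip a ha.1, ha.2]; rfl⟩
  · intro a ha
    simp only [Finset.mem_filter, Finset.mem_univ, true_and] at ha ⊢
    exact ⟨hfix a ha.1, by rw [hflip a ha.1, ha.2]; rfl⟩
  · intro a _; exact Fin.rev_rev a
  · intro a _; exact Fin.rev_rev a

lemma restricted_of_skew {n : ℕ} {σ : Equiv.Perm (Fin (2 * n))} {s : Fin (2 * n) → Bool}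
    (h : IsSkewClan n σ s) : IsRestrictedInvolution n σ (flipS n σ s) := by
  obtain ⟨hinv, hnorm, _, hcomm, hflip⟩ := h
  have hfix : ∀ i : Fin (2 * n), σ i = i → σ (Fin.rev i) = Fin.rev i := by
    intro i hi; rw [hcomm, hi]
  refine ⟨⟨hinv, ?_⟩, hcomm, ?_, ?_⟩
  · intro i
    by_cases hi : σ i = i
    · rw [hi]
    · have h1 : σ (σ i) ≠ σ i := by
        rw [hinv i]; exact fun hc => hi hc.symm
      simp [flipS, hi, h1]
  · intro i
    by_cases hi : σ i = i
    · have hri := hfix i hi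
      have hs := hflip i hi
      rcases lt_or_gt_of_ne (rev_ne_self i) with hlt | hlt
      · have h1 : ¬ i < Fin.rev i := by simpa using le_of_lt hlt
        have h2 : Fin.rev i < Fin.rev (Fin.rev i) := by rwa [Fin.rev_rev]
        simp [flipS, hi, hri, h1, h2, hlt, hs]
      · have h2 : ¬ Fin.rev i < Fin.rev (Fin.rev i) := by
          rw [Fin.rev_rev]; simpa using le_of_lt hlt
        simp [flipS, hi, hri, hlt, lt_asymm hlt, h2, hs]
    · have hri : σ (Fin.rev i) ≠ Fin.rev i := by
        rw [hcomm]
        exact fun hc => hi (Fin.rev_injective hc)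
      simp [flipS, hi, hri]
  · rintro ⟨i, j, hij, hi, hj, hlt⟩
    have hσi : σ i = i := by
      by_contra hc; simp [flipS, hc] at hi
    have hσj : σ j = j := by
      by_contra hc; simp [flipS, hc] at hj
    rw [hσi, hσj] at hlt
    exact absurd hlt (not_lt_of_gt hij)

/-- there is a bijection between the set of restricted involutions on `2n`
letters and the set of skew-symmetric `(n,n)`-clans; in particular the number of
restricted involutions on `2n` letters equals `Z_n`. -/
theorem stmt6 (n : ℕ) :
    Nonempty
      ({q : Equiv.Perm (Fin (2 * n)) × (Fin (2 * n) → Bool) //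
          IsRestrictedInvolution n q.1 q.2} ≃
       {p : Equiv.Perm (Fin (2 * n)) × (Fin (2 * n) → Bool) // IsSkewClan n p.1 p.2}) ∧
    Ihat n = Znum n := by
  have e : {q : Equiv.Perm (Fin (2 * n)) × (Fin (2 * n) → Bool) //
          IsRestrictedInvolution n q.1 q.2} ≃
       {p : Equiv.Perm (Fin (2 * n)) × (Fin (2 * n) → Bool) // IsSkewClan n p.1 p.2} :=
    { toFun := fun q => ⟨(q.1.1, flipS n q.1.1 q.1.2), skew_of_restricted q.2⟩
      invFun := fun p => ⟨(p.1.1, flipS n p.1.1 p.1.2), restricted_of_skew p.2⟩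
      left_inv := by
        rintro ⟨⟨p, ε⟩, hq⟩
        apply Subtype.ext
        refine Prod.ext rfl ?_
        exact flipS_flipS p ε (fun i hi => restricted_true hq hi)
      right_inv := by
        rintro ⟨⟨σ, s⟩, hp⟩
        apply Subtype.ext
        refine Prod.ext rfl ?_
        exact flipS_flipS σ s hp.2.1 }
  exact ⟨⟨e⟩, Nat.card_congr e⟩
end

section
/- The number e_n of weighted (n,n) Delannoy paths satisfies e_0 = 1, e_1 = 3, and the recurrence e_n = 3·e_{n−1} + 2(n−1)·e_{n−2} for all n ≥ 2. -/
/-- Labeled steps are pairs `(L, l)` with `L : Fin 3` (`0` = north `N`, `1` = east `E`,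
`2` = diagonal `D`) and `l : ℕ` the weight.  `wdIdx W` is the (increasing) list of
indices of the steps of the word `W` that are not the weight-one diagonal step `(D,1)`,
i.e. the index sequence `i_1 < … < i_t` of the paper (0-indexed). -/
def wdIdx (W : List (Fin 3 × ℕ)) : List ℕ :=
  (List.range W.length).filter (fun i => decide (W.getD i (0, 0) ≠ ((2 : Fin 3), 1)))

/-- `mcount W i = m_i`: the number of steps strictly before position `i` whose weight
is different from `1`. -/
def mcount (W : List (Fin 3 × ℕ)) (i : ℕ) : ℕ :=
  ((List.range W.length).filter (fun k => decide (k < i ∧ (W.getD k (0, 0)).2 ≠ 1))).length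

/-- `dcount W i = d_i`: the number of steps strictly after position `i` equal to `(D,1)`. -/
def dcount (W : List (Fin 3 × ℕ)) (i : ℕ) : ℕ :=
  ((List.range W.length).filter
    (fun k => decide (i < k ∧ W.getD k (0, 0) = ((2 : Fin 3), 1)))).length

/-- A *weighted `(n,n)` Delannoy path*: a word `W = W_1 … W_r` of labeled steps
`W_i = (L_i, l_i)` such that (in the notation of the paper, with `i_1 < … < i_t` the
indices of the steps different from `(D,1)`):
* each weight is a positive integer and equals `1` on `N` and `E` steps;
* `L_1 … L_r` is a lattice path from `(0,0)` to `(n,n)` (i.e. `#N + #D = #E + #D = n`);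
* `t` is even and every index `i` with `W_i = (D,1)` satisfies `i > i_{t/2}`;
* `L_{i_j} = N` iff `L_{i_{t+1−j}} = E` for `1 ≤ j ≤ t`;
* if `l_{i_j} ≠ 1` for some `1 ≤ j ≤ t/2`, then
  `W_{i_{t+1−j}} = (D, 2n+3−2(i_j + m_{i_j} + d_{i_{t+1−j}}) − l_{i_j})`
  (positions `i_j` are 1-indexed in this formula, as in the paper; here indices are
  0-indexed, whence the `+ 1`). -/
def IsWeightedDelannoy (n : ℕ) (W : List (Fin 3 × ℕ)) : Prop :=
  (∀ w ∈ W, 1 ≤ w.2 ∧ (w.1 ≠ 2 → w.2 = 1)) ∧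
  List.countP (fun w => decide (w.1 = 0 ∨ w.1 = 2)) W = n ∧
  List.countP (fun w => decide (w.1 = 1 ∨ w.1 = 2)) W = n ∧
  Even (wdIdx W).length ∧
  (∀ i < W.length, W.getD i (0, 0) = ((2 : Fin 3), 1) →
    ∀ _ : (wdIdx W).length / 2 - 1 < (wdIdx W).length,
      (wdIdx W).getD ((wdIdx W).length / 2 - 1) 0 < i) ∧
  (∀ j < (wdIdx W).length,
    ((W.getD ((wdIdx W).getD j 0) (0, 0)).1 = 0 ↔
      (W.getD ((wdIdx W).getD ((wdIdx W).length - 1 - j) 0) (0, 0)).1 = 1)) ∧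
  (∀ j < (wdIdx W).length / 2,
    (W.getD ((wdIdx W).getD j 0) (0, 0)).2 ≠ 1 →
      (W.getD ((wdIdx W).getD ((wdIdx W).length - 1 - j) 0) (0, 0)).1 = 2 ∧
      ((W.getD ((wdIdx W).getD ((wdIdx W).length - 1 - j) 0) (0, 0)).2 : ℤ) =
        2 * (n : ℤ) + 3 -
          2 * (((wdIdx W).getD j 0 : ℤ) + 1 +
            (mcount W ((wdIdx W).getD j 0) : ℤ) +
            (dcount W ((wdIdx W).getD ((wdIdx W).length - 1 - j) 0) : ℤ)) -
          ((W.getD ((wdIdx W).getD j 0) (0, 0)).2 : ℤ))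

/-- `e_n`, the number of weighted `(n,n)` Delannoy paths. -/
noncomputable def eDel (n : ℕ) : ℕ :=
  Nat.card {W : List (Fin 3 × ℕ) // IsWeightedDelannoy n W}

/-!
If a weighted `(n+1,n+1)` Delannoy path does not end in `(D,1)`, then `t ≥ 2`, by (ii) it does not
start with `(D,1)` either, and its first and last steps are the outermost pair `W_{i_1}, W_{i_t}`.
By (iii) and (iv) this pair is `(N,E)`, `(E,N)`, or `((D,l),(D,w))` with `l, w ≥ 2` and
`l + w = 2n + 3`, which leaves `2n` choices of `l`. Deleting a final `(D,1)`, resp. the pair, leaves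
a weighted path of size `n`, resp. `n` or `n - 1`, and conversely: appending `(D,1)` raises every
`d_i` by one, wrapping raises every position by one and every `m_i` by `[l_{i_1} ≠ 1]`, and in (iv)
these shifts are exactly compensated by the change of `n`. Hence `e_{n+1} = 3 e_n + 2n e_{n-1}`.
-/

local notation "D₁" => ((2 : Fin 3), (1 : ℕ))

lemma filter_range_length_cons {α : Type*} (p : ℕ → α → Bool) (d x : α) (l : List α) :
    (List.range (x :: l).length).filter (fun k => p k ((x :: l).getD k d)) =
      (if p 0 x then [0] else []) ++
        ((List.range l.length).filter (fun k => p (k + 1) (l.getD k d))).map (· + 1) := by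
  rw [List.length_cons, List.range_succ_eq_map, List.filter_cons, List.filter_map,
    show (x :: l).getD 0 d = x from rfl]
  split <;> rfl

lemma filter_range_length_append_singleton {α : Type*} (p : ℕ → α → Bool) (d y : α)
    (l : List α) :
    (List.range (l ++ [y]).length).filter (fun k => p k ((l ++ [y]).getD k d)) =
      (List.range l.length).filter (fun k => p k (l.getD k d)) ++
        (if p l.length y then [l.length] else []) := by
  rw [List.length_append, List.length_singleton, List.range_succ, List.filter_append]
  congr 1
  · refine List.filter_congr fun k hk => ?_
    rw [List.getD_append _ _ _ _ (List.mem_range.mp hk)]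
  · simp [List.filter_singleton]

lemma wdIdx_cons (x : Fin 3 × ℕ) (W : List (Fin 3 × ℕ)) :
    wdIdx (x :: W) = (if x = D₁ then [] else [0]) ++ (wdIdx W).map (· + 1) := by
  refine (filter_range_length_cons (fun _ a => decide (a ≠ D₁)) _ _ _).trans ?_
  by_cases hx : x = D₁ <;> simp [hx, wdIdx]

lemma wdIdx_append_singleton (W : List (Fin 3 × ℕ)) (y : Fin 3 × ℕ) :
    wdIdx (W ++ [y]) = wdIdx W ++ (if y = D₁ then [] else [W.length]) := by
  refine (filter_range_length_append_singleton (fun _ a => decide (a ≠ D₁)) _ _ _).trans ?_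
  by_cases hy : y = D₁ <;> simp [hy, wdIdx]

lemma mcount_eq_countP_take (W : List (Fin 3 × ℕ)) (i : ℕ) :
    mcount W i = (W.take i).countP (fun w => w.2 ≠ 1) := by
  induction W using List.reverseRecOn with
  | nil => simp [mcount]
  | append_singleton W y ih =>
    rw [mcount, filter_range_length_append_singleton
      (fun k (a : Fin 3 × ℕ) => decide (k < i ∧ a.2 ≠ 1)),
      List.length_append, ← mcount, ih, List.take_append, List.countP_append]
    by_cases hi : W.length < i
    · rw [List.take_of_length_le (l := [y]) (by simp; omega)]
      by_cases hy : y.2 = 1 <;> simp [hi, hy]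
    · simp [hi, Nat.sub_eq_zero_of_le (not_lt.mp hi)]

lemma dcount_eq_count_drop (W : List (Fin 3 × ℕ)) (i : ℕ) :
    dcount W i = (W.drop (i + 1)).count D₁ := by
  induction W using List.reverseRecOn with
  | nil => simp [dcount]
  | append_singleton W y ih =>
    rw [dcount, filter_range_length_append_singleton (fun k a => decide (i < k ∧ a = D₁)),
      List.length_append, ← dcount, ih, List.drop_append, List.count_append]
    by_cases hi : i < W.length
    · rw [Nat.sub_eq_zero_of_le (Nat.succ_le_of_lt hi)]
      by_cases hy : y = D₁ <;> simp [hi, hy]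
    · simp [hi, List.drop_eq_nil_of_le (show [y].length ≤ i + 1 - W.length by simp; omega)]

lemma mcount_zero (W : List (Fin 3 × ℕ)) : mcount W 0 = 0 := by
  simp [mcount_eq_countP_take]

lemma dcount_eq_zero {W : List (Fin 3 × ℕ)} {i : ℕ} (hi : W.length ≤ i + 1) :
    dcount W i = 0 := by
  simp [dcount_eq_count_drop, List.drop_eq_nil_of_le hi]

lemma wdIdx_getD_lt_length {W : List (Fin 3 × ℕ)} {j : ℕ} (hj : j < (wdIdx W).length) :
    (wdIdx W).getD j 0 < W.length := by
  rw [List.getD_eq_getElem _ _ hj]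
  exact List.mem_range.mp (List.mem_filter.mp (List.getElem_mem hj)).1

/-- The paper's `W_{i_{j+1}}`: the `j`-th (from `0`) step of `W` different from `(D,1)`. -/
def wdStep (W : List (Fin 3 × ℕ)) (j : ℕ) : Fin 3 × ℕ :=
  W.getD ((wdIdx W).getD j 0) (0, 0)

-- Conditions (ii), (iii) and (iv), the last three conjuncts of `IsWeightedDelannoy`.
def DiagOnesAfterMiddle (W : List (Fin 3 × ℕ)) : Prop :=
  ∀ i < W.length, W.getD i (0, 0) = D₁ →
    ∀ _ : (wdIdx W).length / 2 - 1 < (wdIdx W).length,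
      (wdIdx W).getD ((wdIdx W).length / 2 - 1) 0 < i

def MirrorNE (W : List (Fin 3 × ℕ)) : Prop :=
  ∀ j < (wdIdx W).length,
    ((wdStep W j).1 = 0 ↔ (wdStep W ((wdIdx W).length - 1 - j)).1 = 1)

def HeavyMirror (n : ℕ) (W : List (Fin 3 × ℕ)) : Prop :=
  ∀ j < (wdIdx W).length / 2, (wdStep W j).2 ≠ 1 →
    (wdStep W ((wdIdx W).length - 1 - j)).1 = 2 ∧
    ((wdStep W ((wdIdx W).length - 1 - j)).2 : ℤ) =
      2 * (n : ℤ) + 3 -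
        2 * (((wdIdx W).getD j 0 : ℤ) + 1 + (mcount W ((wdIdx W).getD j 0) : ℤ) +
          (dcount W ((wdIdx W).getD ((wdIdx W).length - 1 - j) 0) : ℤ)) -
        ((wdStep W j).2 : ℤ)

lemma isWeightedDelannoy_iff (n : ℕ) (W : List (Fin 3 × ℕ)) :
    IsWeightedDelannoy n W ↔
      (∀ w ∈ W, 1 ≤ w.2 ∧ (w.1 ≠ 2 → w.2 = 1)) ∧
      W.countP (fun w => decide (w.1 = 0 ∨ w.1 = 2)) = n ∧
      W.countP (fun w => decide (w.1 = 1 ∨ w.1 = 2)) = n ∧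
      Even (wdIdx W).length ∧ DiagOnesAfterMiddle W ∧ MirrorNE W ∧ HeavyMirror n W :=
  Iff.rfl

section AppendDiagOne

variable (W : List (Fin 3 × ℕ))

lemma wdIdx_append_D1 : wdIdx (W ++ [D₁]) = wdIdx W := by
  simp [wdIdx_append_singleton]

lemma wdStep_append_D1 {j : ℕ} (hj : j < (wdIdx W).length) :
    wdStep (W ++ [D₁]) j = wdStep W j := by
  rw [wdStep, wdStep, wdIdx_append_D1, List.getD_append _ _ _ _ (wdIdx_getD_lt_length hj)]

lemma mcount_append_D1 {i : ℕ} (hi : i ≤ W.length) : mcount (W ++ [D₁]) i = mcount W i := by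
  rw [mcount_eq_countP_take, mcount_eq_countP_take, List.take_append_of_le_length hi]

lemma dcount_append_D1 {i : ℕ} (hi : i < W.length) :
    dcount (W ++ [D₁]) i = dcount W i + 1 := by
  rw [dcount_eq_count_drop, dcount_eq_count_drop, List.drop_append_of_le_length hi,
    List.count_append, List.count_singleton_self]

lemma diagOnesAfterMiddle_append_D1 :
    DiagOnesAfterMiddle (W ++ [D₁]) ↔ DiagOnesAfterMiddle W := by
  rw [DiagOnesAfterMiddle, wdIdx_append_D1, List.length_append, List.length_singleton,
    Nat.forall_lt_succ_right, and_iff_left fun _ hmid => wdIdx_getD_lt_length hmid]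
  exact forall₂_congr fun i hi => by rw [List.getD_append _ _ _ _ hi]

lemma mirrorNE_append_D1 : MirrorNE (W ++ [D₁]) ↔ MirrorNE W := by
  rw [MirrorNE, MirrorNE, wdIdx_append_D1]
  exact forall₂_congr fun j hj => by
    rw [wdStep_append_D1 _ hj, wdStep_append_D1 _ (by omega)]

lemma heavyMirror_append_D1 (n : ℕ) : HeavyMirror (n + 1) (W ++ [D₁]) ↔ HeavyMirror n W := by
  rw [HeavyMirror, HeavyMirror, wdIdx_append_D1]
  refine forall₂_congr fun j hj => ?_
  have hj' : (wdIdx W).length - 1 - j < (wdIdx W).length := by omega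
  rw [wdStep_append_D1 _ (by omega), wdStep_append_D1 _ hj',
    mcount_append_D1 _ (wdIdx_getD_lt_length (by omega)).le,
    dcount_append_D1 _ (wdIdx_getD_lt_length hj')]
  push_cast
  ring_nf

lemma isWeightedDelannoy_append_D1_iff (n : ℕ) :
    IsWeightedDelannoy (n + 1) (W ++ [D₁]) ↔ IsWeightedDelannoy n W := by
  simp only [isWeightedDelannoy_iff, List.forall_mem_append, List.forall_mem_singleton,
    List.countP_append, List.countP_singleton, wdIdx_append_D1, diagOnesAfterMiddle_append_D1,
    mirrorNE_append_D1, heavyMirror_append_D1]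
  simp

end AppendDiagOne

section Wrap

variable {x y : Fin 3 × ℕ} (W : List (Fin 3 × ℕ))

lemma wdIdx_wrap (hx : x ≠ D₁) (hy : y ≠ D₁) :
    wdIdx (x :: (W ++ [y])) = 0 :: ((wdIdx W).map (· + 1) ++ [W.length + 1]) := by
  simp [wdIdx_cons, wdIdx_append_singleton, hx, hy]

lemma length_wdIdx_wrap (hx : x ≠ D₁) (hy : y ≠ D₁) :
    (wdIdx (x :: (W ++ [y]))).length = (wdIdx W).length + 2 := by
  simp [wdIdx_wrap W hx hy]

lemma wdIdx_wrap_getD_zero (hx : x ≠ D₁) (hy : y ≠ D₁) :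
    (wdIdx (x :: (W ++ [y]))).getD 0 0 = 0 := by
  rw [wdIdx_wrap W hx hy, List.getD_cons_zero]

lemma wdIdx_wrap_getD_succ (hx : x ≠ D₁) (hy : y ≠ D₁) {j : ℕ}
    (hj : j < (wdIdx W).length) :
    (wdIdx (x :: (W ++ [y]))).getD (j + 1) 0 = (wdIdx W).getD j 0 + 1 := by
  rw [wdIdx_wrap W hx hy, List.getD_cons_succ, List.getD_append _ _ _ _ (by simpa using hj),
    List.getD_eq_getElem _ _ (by simpa using hj), List.getD_eq_getElem _ _ hj, List.getElem_map]

lemma wdIdx_wrap_getD_last (hx : x ≠ D₁) (hy : y ≠ D₁) :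
    (wdIdx (x :: (W ++ [y]))).getD ((wdIdx W).length + 1) 0 = W.length + 1 := by
  rw [wdIdx_wrap W hx hy, List.getD_cons_succ, List.getD_append_right _ _ _ _ (by simp)]
  simp

lemma wdStep_wrap_zero (hx : x ≠ D₁) (hy : y ≠ D₁) : wdStep (x :: (W ++ [y])) 0 = x := by
  rw [wdStep, wdIdx_wrap_getD_zero W hx hy, List.getD_cons_zero]

lemma wdStep_wrap_succ (hx : x ≠ D₁) (hy : y ≠ D₁) {j : ℕ} (hj : j < (wdIdx W).length) :
    wdStep (x :: (W ++ [y])) (j + 1) = wdStep W j := by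
  rw [wdStep, wdIdx_wrap_getD_succ W hx hy hj, List.getD_cons_succ,
    List.getD_append _ _ _ _ (wdIdx_getD_lt_length hj), wdStep]

lemma wdStep_wrap_last (hx : x ≠ D₁) (hy : y ≠ D₁) :
    wdStep (x :: (W ++ [y])) ((wdIdx W).length + 1) = y := by
  rw [wdStep, wdIdx_wrap_getD_last W hx hy, List.getD_cons_succ,
    List.getD_append_right _ _ _ _ le_rfl]
  simp

lemma mcount_wrap_succ {i : ℕ} (hi : i ≤ W.length) :
    mcount (x :: (W ++ [y])) (i + 1) = (if x.2 = 1 then 0 else 1) + mcount W i := by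
  rw [mcount_eq_countP_take, mcount_eq_countP_take, List.take_succ_cons,
    List.take_append_of_le_length hi, List.countP_cons]
  by_cases hx1 : x.2 = 1 <;> simp [hx1, add_comm]

lemma dcount_wrap_succ (hy : y ≠ D₁) (i : ℕ) :
    dcount (x :: (W ++ [y])) (i + 1) = dcount W i := by
  rw [dcount_eq_count_drop, dcount_eq_count_drop, List.drop_succ_cons, List.drop_append,
    List.count_append, List.count_eq_zero.2 fun h => hy (List.mem_singleton.1
      (List.mem_of_mem_drop h)).symm, add_zero]

lemma diagOnesAfterMiddle_wrap (hx : x ≠ D₁) (hy : y ≠ D₁) (ht : Even (wdIdx W).length) :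
    DiagOnesAfterMiddle (x :: (W ++ [y])) ↔ DiagOnesAfterMiddle W := by
  rw [DiagOnesAfterMiddle, length_wdIdx_wrap W hx hy, List.length_cons, List.length_append,
    List.length_singleton, Nat.forall_lt_succ_left, Nat.forall_lt_succ_right]
  have hfirst : (x :: (W ++ [y])).getD 0 (0, 0) = x := rfl
  have hlast : (x :: (W ++ [y])).getD (W.length + 1) (0, 0) = y := by
    rw [List.getD_cons_succ, List.getD_append_right _ _ _ _ le_rfl]; simp
  simp only [hfirst, hlast, hx, hy, false_implies, true_and, and_true]
  refine forall₂_congr fun i hi => ?_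
  rw [List.getD_cons_succ, List.getD_append _ _ _ _ hi]
  obtain ⟨r, hr⟩ := ht
  rcases Nat.eq_zero_or_pos r with rfl | hr0
  · simp only [hr, Nat.add_zero, Nat.zero_div, Nat.zero_sub, Nat.lt_irrefl, IsEmpty.forall_iff,
      implies_true, iff_true, wdIdx_wrap_getD_zero W hx hy]
    omega
  · rw [show ((wdIdx W).length + 2) / 2 - 1 = ((wdIdx W).length / 2 - 1) + 1 by omega,
      wdIdx_wrap_getD_succ W hx hy (by omega)]
    simp only [show (wdIdx W).length / 2 - 1 < (wdIdx W).length by omega,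
      show (wdIdx W).length / 2 - 1 + 1 < (wdIdx W).length + 2 by omega, forall_true_left,
      Nat.add_lt_add_iff_right]

lemma mirrorNE_wrap (hx : x ≠ D₁) (hy : y ≠ D₁) :
    MirrorNE (x :: (W ++ [y])) ↔ (x.1 = 0 ↔ y.1 = 1) ∧ (y.1 = 0 ↔ x.1 = 1) ∧ MirrorNE W := by
  rw [MirrorNE, length_wdIdx_wrap W hx hy, Nat.forall_lt_succ_left, Nat.forall_lt_succ_right,
    show (wdIdx W).length + 2 - 1 - 0 = (wdIdx W).length + 1 by omega,
    show (wdIdx W).length + 2 - 1 - ((wdIdx W).length + 1) = 0 by omega,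
    wdStep_wrap_zero W hx hy, wdStep_wrap_last W hx hy]
  have hmiddle : (∀ j < (wdIdx W).length, ((wdStep (x :: (W ++ [y])) (j + 1)).1 = 0 ↔
      (wdStep (x :: (W ++ [y])) ((wdIdx W).length + 2 - 1 - (j + 1))).1 = 1)) ↔ MirrorNE W :=
    forall₂_congr fun j hj => by
      rw [show (wdIdx W).length + 2 - 1 - (j + 1) = ((wdIdx W).length - 1 - j) + 1 by omega,
        wdStep_wrap_succ W hx hy hj, wdStep_wrap_succ W hx hy (by omega)]
  rw [hmiddle]
  tauto

lemma heavyMirror_wrap (hx : x ≠ D₁) (hy : y ≠ D₁) {n a : ℕ}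
    (ha : a = 1 + if x.2 = 1 then 0 else 1) :
    HeavyMirror (n + a) (x :: (W ++ [y])) ↔
      (x.2 ≠ 1 → y.1 = 2 ∧ (y.2 : ℤ) = 2 * n + 2 * a + 1 - x.2) ∧ HeavyMirror n W := by
  rw [HeavyMirror, length_wdIdx_wrap W hx hy, Nat.add_div_right _ two_pos,
    Nat.forall_lt_succ_left, show (wdIdx W).length + 2 - 1 - 0 = (wdIdx W).length + 1 by omega,
    wdStep_wrap_zero W hx hy, wdStep_wrap_last W hx hy, wdIdx_wrap_getD_zero W hx hy,
    wdIdx_wrap_getD_last W hx hy, mcount_zero, dcount_eq_zero (by simp)]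
  congr! 1
  · push_cast
    ring_nf
  · refine forall₂_congr fun j hj => ?_
    have hj' : (wdIdx W).length - 1 - j < (wdIdx W).length := by omega
    rw [show (wdIdx W).length + 2 - 1 - (j + 1) = ((wdIdx W).length - 1 - j) + 1 by omega,
      wdStep_wrap_succ W hx hy (by omega), wdStep_wrap_succ W hx hy hj',
      wdIdx_wrap_getD_succ W hx hy (by omega), wdIdx_wrap_getD_succ W hx hy hj',
      mcount_wrap_succ W (wdIdx_getD_lt_length (by omega)).le, dcount_wrap_succ W hy, ha]
    push_cast
    ring_nf

end Wrap

lemma isWeightedDelannoy_wrap_iff {x y : Fin 3 × ℕ} (W : List (Fin 3 × ℕ)) {n a : ℕ}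
    (hx : x ≠ D₁) (hy : y ≠ D₁)
    (hx_weight : 1 ≤ x.2 ∧ (x.1 ≠ 2 → x.2 = 1)) (hy_weight : 1 ≤ y.2 ∧ (y.1 ≠ 2 → y.2 = 1))
    (hrise : ((if x.1 = 0 ∨ x.1 = 2 then 1 else 0) + if y.1 = 0 ∨ y.1 = 2 then 1 else 0) = a)
    (hrun : ((if x.1 = 1 ∨ x.1 = 2 then 1 else 0) + if y.1 = 1 ∨ y.1 = 2 then 1 else 0) = a)
    (ha : a = 1 + if x.2 = 1 then 0 else 1) :
    IsWeightedDelannoy (n + a) (x :: (W ++ [y])) ↔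
      IsWeightedDelannoy n W ∧ (x.1 = 0 ↔ y.1 = 1) ∧ (y.1 = 0 ↔ x.1 = 1) ∧
        (x.2 ≠ 1 → y.1 = 2 ∧ (y.2 : ℤ) = 2 * n + 2 * a + 1 - x.2) := by
  rw [isWeightedDelannoy_iff, isWeightedDelannoy_iff, length_wdIdx_wrap W hx hy, Nat.even_add,
    iff_true_intro even_two, iff_true, mirrorNE_wrap W hx hy, heavyMirror_wrap W hx hy ha]
  simp only [List.forall_mem_cons, List.forall_mem_append, List.not_mem_nil, false_implies,
    implies_true, List.countP_cons, List.countP_append, List.countP_nil, eq_true hx_weight,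
    eq_true hy_weight, true_and, and_true, decide_eq_true_eq]
  constructor
  · rintro ⟨hW, hN, hE, ht, hD, ⟨h0, h1, hM⟩, hH0, hH⟩
    exact ⟨⟨hW, by omega, by omega, ht, (diagOnesAfterMiddle_wrap W hx hy ht).1 hD, hM, hH⟩,
      h0, h1, hH0⟩
  · rintro ⟨⟨hW, hN, hE, ht, hD, hM, hH⟩, h0, h1, hH0⟩
    exact ⟨hW, by omega, by omega, ht, (diagOnesAfterMiddle_wrap W hx hy ht).2 hD, ⟨h0, h1, hM⟩,
      hH0, hH⟩

lemma isWeightedDelannoy_wrap_NE_iff (W : List (Fin 3 × ℕ)) (n : ℕ) :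
    IsWeightedDelannoy (n + 1) ((0, 1) :: (W ++ [(1, 1)])) ↔ IsWeightedDelannoy n W := by
  rw [isWeightedDelannoy_wrap_iff W (by decide) (by decide) (by decide) (by decide) (by decide)
    (by decide) (by decide)]
  simp

lemma isWeightedDelannoy_wrap_EN_iff (W : List (Fin 3 × ℕ)) (n : ℕ) :
    IsWeightedDelannoy (n + 1) ((1, 1) :: (W ++ [(0, 1)])) ↔ IsWeightedDelannoy n W := by
  rw [isWeightedDelannoy_wrap_iff W (by decide) (by decide) (by decide) (by decide) (by decide)
    (by decide) (by decide)]
  simp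

lemma isWeightedDelannoy_wrap_DD_iff (W : List (Fin 3 × ℕ)) (n : ℕ) {l w : ℕ} (hl : 2 ≤ l)
    (hw : 2 ≤ w) :
    IsWeightedDelannoy (n + 2) ((2, l) :: (W ++ [(2, w)])) ↔
      IsWeightedDelannoy n W ∧ l + w = 2 * n + 5 := by
  rw [isWeightedDelannoy_wrap_iff W (by simp; omega) (by simp; omega) (by simp; omega)
    (by simp; omega) (by simp) (by simp) (by simp [show l ≠ 1 by omega])]
  have hFin : ((2 : Fin 3) = 0 ↔ (2 : Fin 3) = 1) := by decide
  simp only [ne_eq, show l ≠ 1 by omega, not_false_eq_true, true_implies, hFin, true_and]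
  exact and_congr_right fun _ => ⟨fun h => by omega, fun h => by omega⟩

lemma IsWeightedDelannoy.cases_of_ne_nil {n : ℕ} {V : List (Fin 3 × ℕ)}
    (hV : IsWeightedDelannoy n V) (hne : V ≠ []) :
    (∃ W, V = W ++ [D₁]) ∨ (∃ W, V = (0, 1) :: (W ++ [(1, 1)])) ∨
      (∃ W, V = (1, 1) :: (W ++ [(0, 1)])) ∨
      ∃ W l w, 2 ≤ l ∧ 2 ≤ w ∧ V = (2, l) :: (W ++ [(2, w)]) := by
  obtain ⟨hweight, -, -, heven, hdiag, hmirror, -⟩ := hV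
  obtain ⟨U, y, rfl⟩ := (List.eq_nil_or_concat' V).resolve_left hne
  by_cases hy : y = D₁
  · exact Or.inl ⟨U, hy ▸ rfl⟩
  have hlen : (wdIdx (U ++ [y])).length = (wdIdx U).length + 1 := by
    simp [wdIdx_append_singleton, hy]
  obtain ⟨x, W, rfl⟩ : ∃ x W, U = x :: W := by
    cases U with
    | nil => rw [hlen] at heven; simp [wdIdx] at heven
    | cons x W => exact ⟨x, W, rfl⟩
  have hx : x ≠ D₁ := by
    intro hx
    have := hdiag 0 (by simp) (by simp [hx]) (by omega)
    omega
  rw [List.cons_append] at hweight hmirror ⊢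
  obtain ⟨h0, h1, -⟩ := (mirrorNE_wrap W hx hy).1 hmirror
  have hxw := hweight x (by simp)
  have hyw := hweight y (by simp)
  clear hweight hdiag hmirror heven hlen hne
  refine Or.inr ?_
  obtain ⟨a, l⟩ := x
  obtain ⟨b, w⟩ := y
  fin_cases a <;> fin_cases b <;> simp at h0 h1 hxw hyw hx hy ⊢ <;> omega

lemma isWeightedDelannoy_wrap_DD_of_fin {n : ℕ} (i : Fin (2 * n)) {W : List (Fin 3 × ℕ)}
    (hW : IsWeightedDelannoy (n - 1) W) :
    IsWeightedDelannoy (n + 1) ((2, i + 2) :: (W ++ [(2, 2 * n + 1 - i)])) := by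
  have hi := i.isLt
  have hn : n - 1 + 2 = n + 1 := by omega
  rw [← hn, isWeightedDelannoy_wrap_DD_iff W (n - 1) (by omega) (by omega)]
  exact ⟨hW, by omega⟩

abbrev WeightedDelannoy (n : ℕ) : Type := {W : List (Fin 3 × ℕ) // IsWeightedDelannoy n W}

def extendPath (n : ℕ) :
    WeightedDelannoy n ⊕ WeightedDelannoy n ⊕ WeightedDelannoy n ⊕
      (Fin (2 * n) × WeightedDelannoy (n - 1)) → WeightedDelannoy (n + 1)
  | .inl W => ⟨W.1 ++ [D₁], (isWeightedDelannoy_append_D1_iff W.1 n).2 W.2⟩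
  | .inr (.inl W) => ⟨(0, 1) :: (W.1 ++ [(1, 1)]), (isWeightedDelannoy_wrap_NE_iff W.1 n).2 W.2⟩
  | .inr (.inr (.inl W)) =>
    ⟨(1, 1) :: (W.1 ++ [(0, 1)]), (isWeightedDelannoy_wrap_EN_iff W.1 n).2 W.2⟩
  | .inr (.inr (.inr (i, W))) =>
    ⟨(2, i + 2) :: (W.1 ++ [(2, 2 * n + 1 - i)]), isWeightedDelannoy_wrap_DD_of_fin i W.2⟩

lemma extendPath_injective (n : ℕ) : Function.Injective (extendPath n) := by
  -- the last step tells the four summands apart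
  rintro (⟨W, _⟩ | ⟨W, _⟩ | ⟨W, _⟩ | ⟨i, W, _⟩) (⟨W', _⟩ | ⟨W', _⟩ | ⟨W', _⟩ | ⟨i', W', _⟩) h <;>
    simp only [extendPath, Subtype.mk.injEq] at h
  all_goals
    have hlast := congrArg List.getLast? h
    simp [List.getLast?_cons, Fin.ext_iff] at hlast h ⊢ <;>
      first | exact h | exact ⟨h.1, h.2.1⟩ | omega

lemma IsWeightedDelannoy.ne_nil {n : ℕ} {V : List (Fin 3 × ℕ)}
    (hV : IsWeightedDelannoy (n + 1) V) : V ≠ [] := by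
  rintro rfl
  simpa using hV.2.1

lemma extendPath_surjective (n : ℕ) : Function.Surjective (extendPath n) := by
  rintro ⟨V, hV⟩
  rcases hV.cases_of_ne_nil hV.ne_nil with
    ⟨W, rfl⟩ | ⟨W, rfl⟩ | ⟨W, rfl⟩ | ⟨W, l, w, hl, hw, rfl⟩
  · exact ⟨.inl ⟨W, (isWeightedDelannoy_append_D1_iff W n).1 hV⟩, rfl⟩
  · exact ⟨.inr (.inl ⟨W, (isWeightedDelannoy_wrap_NE_iff W n).1 hV⟩), rfl⟩
  · exact ⟨.inr (.inr (.inl ⟨W, (isWeightedDelannoy_wrap_EN_iff W n).1 hV⟩)), rfl⟩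
  · obtain _ | m := n
    · exact absurd hV.2.1 (by simp)
    rw [show m + 1 + 1 = m + 2 from rfl, isWeightedDelannoy_wrap_DD_iff W m hl hw] at hV
    refine ⟨.inr (.inr (.inr (⟨l - 2, by omega⟩, ⟨W, hV.1⟩))), ?_⟩
    have hl' : l - 2 + 2 = l := by omega
    have hw' : 2 * (m + 1) + 1 - (l - 2) = w := by omega
    simp only [extendPath, hl', hw']

lemma isWeightedDelannoy_zero_iff (W : List (Fin 3 × ℕ)) : IsWeightedDelannoy 0 W ↔ W = [] := by
  refine ⟨fun ⟨_, hN, hE, _⟩ => List.eq_nil_iff_forall_not_mem.2 fun x hx => ?_, ?_⟩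
  · have hxN := List.countP_eq_zero.1 hN x hx
    have hxE := List.countP_eq_zero.1 hE x hx
    simp only [decide_eq_true_eq] at hxN hxE
    omega
  · rintro rfl
    simp [isWeightedDelannoy_iff, DiagOnesAfterMiddle, MirrorNE, HeavyMirror, wdIdx]

lemma finite_weightedDelannoy (n : ℕ) : Finite (WeightedDelannoy n) := by
  induction n using Nat.strong_induction_on with
  | _ n ih =>
    cases n with
    | zero =>
      refine Finite.of_injective (fun _ => ()) fun a b _ => Subtype.ext ?_
      rw [(isWeightedDelannoy_zero_iff _).1 a.2, (isWeightedDelannoy_zero_iff _).1 b.2]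
    | succ m =>
      have := ih m (by omega)
      have := ih (m - 1) (by omega)
      exact Finite.of_surjective _ (extendPath_surjective m)

lemma eDel_zero : eDel 0 = 1 :=
  Nat.card_eq_one_iff_exists.2 ⟨⟨[], (isWeightedDelannoy_zero_iff _).2 rfl⟩,
    fun W => Subtype.ext ((isWeightedDelannoy_zero_iff _).1 W.2)⟩

lemma eDel_succ (n : ℕ) : eDel (n + 1) = 3 * eDel n + 2 * n * eDel (n - 1) := by
  have := finite_weightedDelannoy n
  have := finite_weightedDelannoy (n - 1)
  rw [eDel, ← Nat.card_congr
    (Equiv.ofBijective _ ⟨extendPath_injective n, extendPath_surjective n⟩)]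
  simp only [Nat.card_sum, Nat.card_prod, Nat.card_eq_fintype_card (α := Fin _), Fintype.card_fin]
  rw [eDel, eDel]
  ring

/-- `e_0 = 1`, `e_1 = 3`, and `e_n = 3·e_{n−1} + 2(n−1)·e_{n−2}` for `n ≥ 2`. -/
theorem stmt10 :
    eDel 0 = 1 ∧ eDel 1 = 3 ∧
    ∀ n : ℕ, 2 ≤ n → eDel n = 3 * eDel (n - 1) + 2 * (n - 1) * eDel (n - 2) := by
  refine ⟨eDel_zero, by simpa [eDel_zero] using eDel_succ 0, fun n hn => ?_⟩
  obtain ⟨m, rfl⟩ : ∃ m, n = m + 1 := ⟨n - 1, by omega⟩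
  simpa using eDel_succ m
end

section
/- The number ε_n of skew-symmetric (n,n)-clans lying in the largest sect equals Σ C(n,β)·C(n−β,2α)·(2α)!/(2^α·α!), where the sum is over all nonnegative integers α, β with 2α + β ≤ n. -/
/-- A skew-symmetric `(n,n)`-clan `(σ, s)` lies in the *largest sect* if every `−` sign
(`s i = false` at a fixed point) occupies a position in the first half, every `+` sign
occupies a position in the second half, and every pair of matching natural numbers has
one position in each half. -/
def IsLargestSectClan (n : ℕ) (σ : Equiv.Perm (Fin (2 * n))) (s : Fin (2 * n) → Bool) :
    Prop :=
  IsSkewClan n σ s ∧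
  (∀ i : Fin (2 * n), σ i = i → (s i = false ↔ i.val < n)) ∧
  (∀ i : Fin (2 * n), σ i ≠ i → (i.val < n ↔ ¬ (σ i).val < n))

/-- `ε_n`, the number of skew-symmetric `(n,n)`-clans in the largest sect. -/
noncomputable def epsnum (n : ℕ) : ℕ :=
  Nat.card {p : Equiv.Perm (Fin (2 * n)) × (Fin (2 * n) → Bool) //
    IsLargestSectClan n p.1 p.2}

section Counting

open Finset Nat

lemma factorial_two_mul_div (a : ℕ) : (2 * a)! / (2 ^ a * a !) = (2 * a - 1)‼ := by
  rcases a with _ | a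
  · rfl
  · rw [show 2 * (a + 1) = (2 * a + 1) + 1 by ring, factorial_eq_mul_doubleFactorial,
      show 2 * a + 1 + 1 = 2 * (a + 1) by ring, doubleFactorial_two_mul,
      Nat.mul_div_cancel_left _ (by positivity)]
    rfl

lemma choose_mul_choose_sub_comm (n a b : ℕ) :
    n.choose a * (n - a).choose b = n.choose b * (n - b).choose a := by
  have ha := choose_mul (n := n) (le_add_right a b)
  have hb := choose_mul (n := n) (le_add_left b a)
  rw [Nat.add_sub_cancel_left] at ha
  rw [Nat.add_sub_cancel] at hb
  rw [← ha, ← hb, choose_symm_add]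

lemma sum_range_choose_of_le {m n : ℕ} (h : m ≤ n) :
    ∑ b ∈ range (n + 1), m.choose b = 2 ^ m := by
  rw [← sum_range_choose, eq_comm]
  refine sum_subset (range_subset_range.2 (by omega)) fun b _ hb => ?_
  exact choose_eq_zero_of_lt (by simp at hb; omega)

lemma two_mul_choose_mul_two_pow (n k : ℕ) :
    2 * (n.choose (k + 1) * 2 ^ (n - (k + 1))) = n.choose (k + 1) * 2 ^ (n - k) := by
  rcases lt_or_ge n (k + 1) with h | h
  · simp [choose_eq_zero_of_lt h]
  · rw [show n - k = n - (k + 1) + 1 by omega, pow_succ]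
    ring

/-- Choose the `2a` moved points, a perfect matching of them (`(2a - 1)‼` ways, which is `1`
for `a = 0`), and a sign at every other point. -/
def signedInvolutionCount (n : ℕ) : ℕ :=
  ∑ a ∈ range (n + 1), n.choose (2 * a) * 2 ^ (n - 2 * a) * (2 * a - 1)‼

lemma signedInvolutionCount_eq_sum_range {n m : ℕ} (h : n < m) :
    signedInvolutionCount n =
      ∑ a ∈ range m, n.choose (2 * a) * 2 ^ (n - 2 * a) * (2 * a - 1)‼ := by
  refine sum_subset (range_subset_range.2 h) fun a _ ha => ?_
  rw [choose_eq_zero_of_lt (by simp at ha; omega), zero_mul, zero_mul]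

lemma signedInvolutionCount_add_two (m : ℕ) :
    signedInvolutionCount (m + 2) =
      2 * signedInvolutionCount (m + 1) + (m + 1) * signedInvolutionCount m := by
  have hterm (a : ℕ) :
      (m + 2).choose (2 * (a + 1)) * 2 ^ (m + 2 - 2 * (a + 1)) * (2 * (a + 1) - 1)‼ =
        2 * ((m + 1).choose (2 * (a + 1)) * 2 ^ (m + 1 - 2 * (a + 1)) * (2 * (a + 1) - 1)‼) +
          (m + 1) * (m.choose (2 * a) * 2 ^ (m - 2 * a) * (2 * a - 1)‼) := by
    have hpow := two_mul_choose_mul_two_pow (m + 1) (2 * a + 1)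
    rw [show 2 * (a + 1) = 2 * a + 1 + 1 by ring,
      show m + 2 - (2 * a + 1 + 1) = m - 2 * a by omega, Nat.add_sub_cancel,
      doubleFactorial_add_one, choose_succ_succ' (m + 1)]
    rw [show m + 1 - (2 * a + 1) = m - 2 * a by omega] at hpow
    calc _ = (m + 1).choose (2 * a + 1) * (2 * a + 1) * 2 ^ (m - 2 * a) * (2 * a - 1)‼ +
          2 * ((m + 1).choose (2 * a + 1 + 1) * 2 ^ (m + 1 - (2 * a + 1 + 1))) *
            ((2 * a + 1) * (2 * a - 1)‼) := by rw [hpow]; ring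
      _ = _ := by rw [← add_one_mul_choose_eq]; ring
  have hsplit (k : ℕ) (hk : k ≤ m + 2) : signedInvolutionCount k =
      ∑ a ∈ range (m + 2), k.choose (2 * (a + 1)) * 2 ^ (k - 2 * (a + 1)) * (2 * (a + 1) - 1)‼ +
        2 ^ k := by
    rw [signedInvolutionCount_eq_sum_range (show k < m + 3 by omega), sum_range_succ']
    simp
  rw [signedInvolutionCount_eq_sum_range (show m < m + 2 by omega), hsplit _ le_rfl,
    hsplit _ (by omega), sum_congr rfl fun a _ => hterm a, sum_add_distrib, ← mul_sum, ← mul_sum]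
  ring

lemma double_sum_eq_signedInvolutionCount (n : ℕ) :
    ∑ p ∈ (range (n + 1) ×ˢ range (n + 1)).filter (fun p => 2 * p.1 + p.2 ≤ n),
      n.choose p.2 * (n - p.2).choose (2 * p.1) * ((2 * p.1)! / (2 ^ p.1 * p.1 !)) =
    signedInvolutionCount n := by
  rw [sum_filter, sum_product, signedInvolutionCount]
  refine sum_congr rfl fun a _ => ?_
  calc _ = ∑ b ∈ range (n + 1), n.choose (2 * a) * (2 * a - 1)‼ * (n - 2 * a).choose b := by
        refine sum_congr rfl fun b _ => ?_
        split_ifs with h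
        · rw [← choose_mul_choose_sub_comm, factorial_two_mul_div]
          ring
        · rcases le_or_gt (2 * a) n with ha | ha
          · rw [choose_eq_zero_of_lt (show n - 2 * a < b by omega), mul_zero]
          · rw [choose_eq_zero_of_lt ha, zero_mul, zero_mul]
    _ = _ := by rw [← mul_sum, sum_range_choose_of_le (Nat.sub_le n (2 * a))]; ring

end Counting

@[ext]
structure SignedInvolution (α : Type*) where
  toFun : α → α
  sign : α → Bool
  involutive : Function.Involutive toFun
  sign_eq_true_of_ne : ∀ a, toFun a ≠ a → sign a = true

namespace SignedInvolution

variable {α β : Type*}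

instance [Finite α] : Finite (SignedInvolution α) :=
  Finite.of_injective (fun q => (q.toFun, q.sign)) fun _ _ h =>
    SignedInvolution.ext (congrArg Prod.fst h) (congrArg Prod.snd h)

lemma sign_toFun (q : SignedInvolution α) {a : α} (ha : q.sign a = true) :
    q.sign (q.toFun a) = true := by
  by_cases hfix : q.toFun a = a
  · rwa [hfix]
  · exact q.sign_eq_true_of_ne _ (by rwa [q.involutive, ne_comm])

lemma toFun_eq_self (q : SignedInvolution α) {a : α} (ha : q.sign a = false) : q.toFun a = a := by
  by_contra hne
  simp [q.sign_eq_true_of_ne a hne] at ha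

def congr (e : α ≃ β) : SignedInvolution α ≃ SignedInvolution β where
  toFun q := ⟨e ∘ q.toFun ∘ e.symm, q.sign ∘ e.symm, fun b => by simp [q.involutive _],
    fun _ hb => q.sign_eq_true_of_ne _ fun h => hb (by simp [h])⟩
  invFun q := ⟨e.symm ∘ q.toFun ∘ e, q.sign ∘ e, fun a => by simp [q.involutive _],
    fun _ ha => q.sign_eq_true_of_ne _ fun h => ha (by simp [h])⟩
  left_inv q := by ext <;> simp
  right_inv q := by ext <;> simp

lemma card_congr (e : α ≃ β) : Nat.card (SignedInvolution α) = Nat.card (SignedInvolution β) :=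
  Nat.card_congr (congr e)

lemma card_eq_one_of_isEmpty [IsEmpty α] : Nat.card (SignedInvolution α) = 1 := by
  refine Nat.card_eq_one_iff_unique.2
    ⟨⟨fun p q => ?_⟩, ⟨⟨id, fun _ => true, fun _ => rfl, fun _ _ => rfl⟩⟩⟩
  ext a <;> exact isEmptyElim a

def extendFixed (b : Bool) (q : SignedInvolution β) : SignedInvolution (Option β) where
  toFun := Option.map q.toFun
  sign o := o.elim b q.sign
  involutive o := by cases o <;> simp [q.involutive _]
  sign_eq_true_of_ne o h := by
    cases o with
    | none => simp at h
    | some a => exact q.sign_eq_true_of_ne a (by simpa using h)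

lemma isSome_toFun_some_of_fixed (q : SignedInvolution (Option β)) (h : q.toFun none = none)
    (a : β) : (q.toFun (some a)).isSome :=
  Option.isSome_iff_ne_none.2 fun h' =>
    Option.some_ne_none a (q.involutive.injective (h'.trans h.symm))

def restrictFixed (q : SignedInvolution (Option β)) (h : q.toFun none = none) :
    SignedInvolution β where
  toFun a := (q.toFun (some a)).get (q.isSome_toFun_some_of_fixed h a)
  sign a := q.sign (some a)
  involutive a := Option.some_injective _ (by simp only [Option.some_get, q.involutive _])
  sign_eq_true_of_ne a ha := q.sign_eq_true_of_ne _ fun h' => ha (by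
    apply Option.some_injective; rw [Option.some_get, h'])

lemma extendFixed_restrictFixed (q : SignedInvolution (Option β)) (h : q.toFun none = none) :
    extendFixed (q.sign none) (restrictFixed q h) = q := by
  ext : 1 <;> funext o <;> rcases o with _ | a
  all_goals simp [extendFixed, restrictFixed, h]

section restrictPair

variable (q : SignedInvolution (Option β)) (j : β) (h : q.toFun none = some j)
include h

lemma toFun_some_of_pair : q.toFun (some j) = none := by rw [← h, q.involutive]

lemma isSome_toFun_some_of_pair (a : {b // b ≠ j}) : (q.toFun (some a.1)).isSome :=
  Option.isSome_iff_ne_none.2 fun h' => a.2 (Option.some_injective _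
    (q.involutive.injective (h'.trans (q.toFun_some_of_pair j h).symm)))

lemma get_toFun_some_ne_of_pair (a : {b // b ≠ j}) :
    (q.toFun (some a.1)).get (q.isSome_toFun_some_of_pair j h a) ≠ j := fun h' =>
  Option.some_ne_none a.1 <| q.involutive.injective <| by
    rw [← Option.some_get (q.isSome_toFun_some_of_pair j h a), h', h]

def restrictPair : SignedInvolution {b // b ≠ j} where
  toFun a := ⟨(q.toFun (some a.1)).get (q.isSome_toFun_some_of_pair j h a),
    q.get_toFun_some_ne_of_pair j h a⟩
  sign a := q.sign (some a.1)
  involutive a := Subtype.ext (Option.some_injective _ (by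
    simp only [Option.some_get, q.involutive _]))
  sign_eq_true_of_ne a ha := q.sign_eq_true_of_ne _ fun h' => ha (Subtype.ext (by
    apply Option.some_injective; rw [Option.some_get, h']))

end restrictPair

variable [DecidableEq β]

def extendPair (j : β) (q : SignedInvolution {b // b ≠ j}) : SignedInvolution (Option β) where
  toFun o := o.elim (some j) fun a => if h : a = j then none else some (q.toFun ⟨a, h⟩).1
  sign o := o.elim true fun a => if h : a = j then true else q.sign ⟨a, h⟩
  involutive o := by
    rcases o with _ | a
    · simp
    · by_cases h : a = j
      · simp [h]
      · simp [h, (q.toFun ⟨a, h⟩).2, q.involutive _]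
  sign_eq_true_of_ne o h := by
    rcases o with _ | a
    · rfl
    · by_cases ha : a = j
      · simp [ha]
      · simp only [Option.elim_some, ha, dite_false] at h ⊢
        exact q.sign_eq_true_of_ne _ fun h' => h (by rw [h'])

lemma extendPair_restrictPair (q : SignedInvolution (Option β)) (j : β)
    (h : q.toFun none = some j) : extendPair j (restrictPair q j h) = q := by
  have hj := q.toFun_some_of_pair j h
  ext : 1 <;> funext o <;> rcases o with _ | a
  · simp [extendPair, h]
  · by_cases ha : a = j
    · subst ha; simp [extendPair, hj]
    · simp [extendPair, restrictPair, ha]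
  · simp [extendPair, q.sign_eq_true_of_ne none (by simp [h])]
  · by_cases ha : a = j
    · subst ha; simp [extendPair, q.sign_eq_true_of_ne (some a) (by simp [hj])]
    · simp [extendPair, restrictPair, ha]


lemma bijective_extend :
    Function.Bijective (Sum.elim (fun p : Bool × SignedInvolution β => extendFixed p.1 p.2)
      (fun p : (j : β) × SignedInvolution {b // b ≠ j} => extendPair p.1 p.2)) := by
  refine ⟨Function.Injective.sumElim ?_ ?_ ?_, fun q => ?_⟩
  · rintro ⟨b, q⟩ ⟨b', q'⟩ h
    have hf := congrArg toFun h
    have hs := congrArg sign h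
    obtain rfl : b = b' := congrFun hs none
    obtain rfl : q = q' := SignedInvolution.ext
      (funext fun a => Option.some_injective _ (congrFun hf (some a)))
      (funext fun a => congrFun hs (some a))
    rfl
  · rintro ⟨j, q⟩ ⟨j', q'⟩ h
    have hf := congrArg toFun h
    have hs := congrArg sign h
    obtain rfl : j = j' := Option.some_injective _ (congrFun hf none)
    obtain rfl : q = q' := SignedInvolution.ext
      (funext fun a => Subtype.ext <| by simpa [extendPair, a.2] using congrFun hf (some a.1))
      (funext fun a => by simpa [extendPair, a.2] using congrFun hs (some a.1))
    rfl
  · rintro ⟨b, q⟩ ⟨j, q'⟩ h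
    simpa [extendFixed, extendPair] using congrArg (fun q => q.toFun none) h
  · rcases h : q.toFun none with _ | j
    · exact ⟨.inl (q.sign none, restrictFixed q h), extendFixed_restrictFixed q h⟩
    · exact ⟨.inr ⟨j, restrictPair q j h⟩, extendPair_restrictPair q j h⟩

lemma card_option [Fintype β] :
    Nat.card (SignedInvolution (Option β)) =
      2 * Nat.card (SignedInvolution β) + ∑ j : β, Nat.card (SignedInvolution {b // b ≠ j}) := by
  rw [← Nat.card_eq_of_bijective _ bijective_extend, Nat.card_sum, Nat.card_prod, Nat.card_sigma,
    Nat.card_eq_fintype_card (α := Bool), Fintype.card_bool]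

lemma card_fin_succ (m : ℕ) :
    Nat.card (SignedInvolution (Fin (m + 1))) =
      2 * Nat.card (SignedInvolution (Fin m)) + m * Nat.card (SignedInvolution (Fin (m - 1))) := by
  have hfib (j : Fin m) :
      Nat.card (SignedInvolution {b // b ≠ j}) = Nat.card (SignedInvolution (Fin (m - 1))) :=
    card_congr (Fintype.equivFinOfCardEq (by simp [Fintype.card_subtype_compl]))
  simp [card_congr (finSuccEquiv m), card_option, hfib]

lemma card_fin (n : ℕ) :
    Nat.card (SignedInvolution (Fin n)) = signedInvolutionCount n := by
  induction n using Nat.twoStepInduction with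
  | zero => rw [card_eq_one_of_isEmpty]; rfl
  | one => rw [card_fin_succ, card_eq_one_of_isEmpty]; rfl
  | more m ih₀ ih₁ =>
    rw [card_fin_succ, Nat.add_sub_cancel, ih₀, ih₁,
      signedInvolutionCount_add_two]

end SignedInvolution

section Crossing

variable {α : Type*}

def IsCrossingInvolution (π : Equiv.Perm (α ⊕ α)) : Prop :=
  Function.Involutive π ∧ (∀ x, π x.swap = (π x).swap) ∧
    ∀ x, π x ≠ x → (π x).isLeft ≠ x.isLeft

namespace IsCrossingInvolution

variable {π : Equiv.Perm (α ⊕ α)} (h : IsCrossingInvolution π)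
include h

lemma eq_of_apply_inl_eq_inl {a b : α} (hab : π (.inl a) = .inl b) : b = a := by
  by_contra hne
  exact h.2.2 (.inl a) (by simp [hab, hne]) (by simp [hab])

lemma apply_inl_eq_inr {a b : α} (hab : π (.inl a) = .inr b) : π (.inl b) = .inr a := by
  have hb : π (.inr b) = .inl a := by rw [← hab, h.1]
  simpa [hb] using h.2.1 (.inr b)

end IsCrossingInvolution

namespace SignedInvolution

def sumFun (q : SignedInvolution α) : α ⊕ α → α ⊕ α
  | .inl a => if q.sign a then .inr (q.toFun a) else .inl a
  | .inr a => if q.sign a then .inl (q.toFun a) else .inr a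

lemma sumFun_involutive (q : SignedInvolution α) : Function.Involutive q.sumFun := by
  rintro (a | a) <;> cases ha : q.sign a <;> simp [sumFun, ha, sign_toFun, q.involutive a]

def toCrossingInvolution (q : SignedInvolution α) :
    {π : Equiv.Perm (α ⊕ α) // IsCrossingInvolution π} :=
  ⟨q.sumFun_involutive.toPerm, q.sumFun_involutive,
    by rintro (a | a) <;> cases ha : q.sign a <;> simp [sumFun, ha],
    by rintro (a | a) <;> cases ha : q.sign a <;> simp [sumFun, ha]⟩

def ofCrossingInvolution (π : {π : Equiv.Perm (α ⊕ α) // IsCrossingInvolution π}) :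
    SignedInvolution α where
  toFun a := (π.1 (.inl a)).elim id id
  sign a := (π.1 (.inl a)).isRight
  involutive a := by
    rcases hb : π.1 (.inl a) with b | b
    · simp [hb, π.2.eq_of_apply_inl_eq_inl hb]
    · simp [hb, π.2.apply_inl_eq_inr hb]
  sign_eq_true_of_ne a ha := by
    rcases hb : π.1 (.inl a) with b | b
    · simp [hb, π.2.eq_of_apply_inl_eq_inl hb] at ha
    · rfl

def crossingEquiv :
    SignedInvolution α ≃ {π : Equiv.Perm (α ⊕ α) // IsCrossingInvolution π} where
  toFun := toCrossingInvolution
  invFun := ofCrossingInvolution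
  left_inv q := by
    ext : 1 <;> funext a <;> cases ha : q.sign a <;>
      simp [ofCrossingInvolution, toCrossingInvolution, sumFun, ha, q.toFun_eq_self]
  right_inv π := by
    set π' := toCrossingInvolution (ofCrossingInvolution π)
    have hinl (a : α) : π'.1 (.inl a) = π.1 (.inl a) := by
      rcases hb : π.1 (.inl a) with b | b
      · simp [π', toCrossingInvolution, ofCrossingInvolution, sumFun, hb,
          π.2.eq_of_apply_inl_eq_inl hb]
      · simp [π', toCrossingInvolution, ofCrossingInvolution, sumFun, hb]
    refine Subtype.ext (Equiv.ext ?_)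
    rintro (a | a)
    · exact hinl a
    · calc π'.1 (.inr a) = (π'.1 (.inl a)).swap := π'.2.2.1 (.inl a)
        _ = (π.1 (.inl a)).swap := by rw [hinl]
        _ = π.1 (.inr a) := (π.2.2.1 (.inl a)).symm

end SignedInvolution

end Crossing

section LargestSect

open Finset

variable {n : ℕ}

/-- `inl a` is the position `a` of the first half and `inr a` its mirror image `2n - 1 - a`, so
that `Fin.rev` becomes `Sum.swap`. -/
def halves (n : ℕ) : Fin n ⊕ Fin n ≃ Fin (2 * n) :=
  (Equiv.sumCongr (Equiv.refl _) Fin.revPerm).trans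
    (finSumFinEquiv.trans (finCongr (two_mul n).symm))

lemma val_halves_inl (a : Fin n) : (halves n (.inl a)).val = a := rfl

lemma halves_inr (a : Fin n) : halves n (.inr a) = (halves n (.inl a)).rev := by
  ext; simp [halves]; omega

lemma halves_swap (x : Fin n ⊕ Fin n) : halves n x.swap = (halves n x).rev := by
  rcases x with a | a <;> simp [halves_inr]

lemma val_halves_lt_iff (x : Fin n ⊕ Fin n) : (halves n x).val < n ↔ x.isLeft := by
  rcases x with a | a
  · simp [val_halves_inl]
  · simp only [halves_inr, Fin.val_rev, val_halves_inl, Sum.isLeft_inr, Bool.false_eq_true,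
      iff_false, not_lt]
    omega

lemma halves_symm_rev (i : Fin (2 * n)) :
    (halves n).symm i.rev = ((halves n).symm i).swap := by
  rw [Equiv.symm_apply_eq, halves_swap, Equiv.apply_symm_apply]

lemma isLeft_halves_symm (i : Fin (2 * n)) : ((halves n).symm i).isLeft ↔ i.val < n := by
  rw [← val_halves_lt_iff, Equiv.apply_symm_apply]

lemma card_fixed_sign_true_eq_card_fixed_sign_false {m : ℕ} {σ : Equiv.Perm (Fin m)}
    {s : Fin m → Bool} (hrev : ∀ i, σ i.rev = (σ i).rev)
    (hflip : ∀ i, σ i = i → s i.rev = !s i) :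
    (univ.filter fun i => σ i = i ∧ s i = true).card =
      (univ.filter fun i => σ i = i ∧ s i = false).card := by
  have hfix (i : Fin m) : σ i.rev = i.rev ↔ σ i = i := by rw [hrev, Fin.rev_inj]
  refine card_nbij' Fin.rev Fin.rev ?_ ?_ (fun i _ => Fin.rev_rev i) (fun i _ => Fin.rev_rev i)
  all_goals intro i hi; simp_all

lemma isLargestSectClan_iff {σ : Equiv.Perm (Fin (2 * n))} {s : Fin (2 * n) → Bool} :
    IsLargestSectClan n σ s ↔
      IsCrossingInvolution ((halves n).symm.permCongr σ) ∧
        s = fun i => decide (σ i = i → n ≤ i.val) := by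
  constructor
  · rintro ⟨⟨hinv, hnorm, -, hrev, -⟩, hsect, hcross⟩
    refine ⟨⟨fun x => by simp [hinv _],
      fun x => by simp [halves_swap, hrev, halves_symm_rev], fun x hx => ?_⟩, funext fun i => ?_⟩
    · have := hcross (halves n x) (by simpa [Equiv.symm_apply_eq] using hx)
      simp only [Equiv.permCongr_apply, Equiv.symm_symm, ne_eq]
      rw [Bool.eq_iff_iff, isLeft_halves_symm, ← val_halves_lt_iff]
      tauto
    · by_cases h : σ i = i
      · have := hsect i h
        cases hsi : s i <;> simp_all
      · simpa [h] using hnorm i h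
  · rintro ⟨hπ, rfl⟩
    have hrev (i : Fin (2 * n)) : σ i.rev = (σ i).rev := by
      simpa [halves_swap, ← halves_symm_rev] using hπ.2.1 ((halves n).symm i)
    have hflip (i : Fin (2 * n)) (h : σ i = i) :
        decide (σ i.rev = i.rev → n ≤ i.rev.val) = !decide (σ i = i → n ≤ i.val) := by
      have := i.isLt
      simp only [hrev, h, Fin.val_rev, forall_const]
      rw [← decide_not, decide_eq_decide]
      omega
    refine ⟨⟨fun i => by simpa using hπ.1 ((halves n).symm i), fun i h => by simp [h],
      card_fixed_sign_true_eq_card_fixed_sign_false hrev hflip, hrev, hflip⟩,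
      fun i h => by simp [h], fun i h => ?_⟩
    have := hπ.2.2 ((halves n).symm i) (by simpa [Equiv.symm_apply_eq] using h)
    simp only [Equiv.permCongr_apply, Equiv.symm_symm, Equiv.apply_symm_apply, ne_eq] at this
    rw [Bool.eq_iff_iff, isLeft_halves_symm, isLeft_halves_symm] at this
    tauto

def largestSectEquiv (n : ℕ) :
    {p : Equiv.Perm (Fin (2 * n)) × (Fin (2 * n) → Bool) // IsLargestSectClan n p.1 p.2} ≃
      {π : Equiv.Perm (Fin n ⊕ Fin n) // IsCrossingInvolution π} where
  toFun p := ⟨(halves n).symm.permCongr p.1.1, (isLargestSectClan_iff.1 p.2).1⟩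
  invFun π := ⟨((halves n).permCongr π.1,
      fun i => decide ((halves n).permCongr π.1 i = i → n ≤ i.val)),
    isLargestSectClan_iff.2 ⟨by convert π.2; ext; simp, rfl⟩⟩
  left_inv p := by
    obtain ⟨⟨σ, s⟩, hp⟩ := p
    have hs : s = _ := (isLargestSectClan_iff.1 hp).2
    ext : 2
    · ext; simp
    · simp [hs]
  right_inv π := Subtype.ext (by ext; simp)

end LargestSect

lemma epsnum_eq_card_signedInvolution (n : ℕ) :
    epsnum n = Nat.card (SignedInvolution (Fin n)) :=
  Nat.card_congr ((largestSectEquiv n).trans SignedInvolution.crossingEquiv.symm)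

/-- `ε_n = Σ C(n,β)·C(n−β,2α)·(2α)!/(2^α·α!)`, the sum running over all
nonnegative integers `α, β` with `2α + β ≤ n` (the division is exact). -/
theorem stmt11 (n : ℕ) :
    epsnum n =
      ∑ p ∈ (Finset.range (n + 1) ×ˢ Finset.range (n + 1)).filter
          (fun p => 2 * p.1 + p.2 ≤ n),
        Nat.choose n p.2 * Nat.choose (n - p.2) (2 * p.1) *
          (Nat.factorial (2 * p.1) / (2 ^ p.1 * Nat.factorial p.1)) := by
  rw [epsnum_eq_card_signedInvolution, SignedInvolution.card_fin,
    double_sum_eq_signedInvolutionCount]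
end

section
/- The number P_n of partial involutions on n letters satisfies P_0 = 1, P_1 = 2, and the recurrence P_n = 2·P_{n−1} + (n−1)·P_{n−2} for all n ≥ 2. -/
/-!
Record a partial involution as a symmetric partial map `f : α → Option α`, with `f i = some j`
exactly when the `(i, j)` entry is `1`. Sort the partial involutions of an `n`-element set by
their value at a point `p`: either `p` is unmatched (`f p = none`), or fixed (`f p = some p`), or
paired with one of the other `n - 1` points `q`. In each case the rest of `f` is an arbitrary
partial involution of the remaining `n - 1`, `n - 1` or `n - 2` points, so
`P_n = 2 P_{n-1} + (n - 1) P_{n-2}`.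
-/

/-- A *partial involution* on `n` letters: a symmetric `n × n` partial permutation
matrix (entries in `{0,1}`, at most one nonzero entry in each row and each column),
viewed over `ℚ`. -/
def IsPartialInvolution (n : ℕ) (M : Matrix (Fin n) (Fin n) ℚ) : Prop :=
  (∀ i j, M i j = 0 ∨ M i j = 1) ∧
  (∀ i j j', M i j = 1 → M i j' = 1 → j = j') ∧
  (∀ i i' j, M i j = 1 → M i' j = 1 → i = i') ∧
  M.IsSymm

/-- `P_n`, the number of partial involutions on `n` letters. -/
noncomputable def Pnum (n : ℕ) : ℕ :=
  Nat.card {M : Matrix (Fin n) (Fin n) ℚ // IsPartialInvolution n M}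

abbrev PartialInvolution (α : Type*) : Type _ :=
  {f : α → Option α // ∀ i j, f i = some j → f j = some i}

namespace PartialInvolution

variable {α β : Type*}

def congr (e : α ≃ β) : PartialInvolution α ≃ PartialInvolution β :=
  Equiv.subtypeEquiv (e.arrowCongr e.optionCongr) fun f => by
    simp [Equiv.arrowCongr_apply, e.forall_congr_left, ← e.eq_symm_apply]

def equivFunOfSubsingleton [Subsingleton α] : PartialInvolution α ≃ (α → Option α) :=
  Equiv.subtypeUnivEquiv fun _ i j h => by rwa [Subsingleton.elim j i] at h ⊢

section restrict

variable {p : α → Prop}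

def restrict (f : PartialInvolution α) (hf : ∀ x y, p x → f.1 x = some y → p y) :
    PartialInvolution {x // p x} :=
  ⟨fun x => (f.1 x).pmap Subtype.mk (fun y hy => hf x y x.2 hy), fun i j h => by
    simp only [Option.pmap_eq_some_iff] at h ⊢
    obtain ⟨y, hy, hfy, rfl⟩ := h
    exact ⟨i, i.2, f.2 _ _ hfy, rfl⟩⟩

theorem map_val_restrict (f : PartialInvolution α) (hf) (x : {x // p x}) :
    ((f.restrict hf).1 x).map Subtype.val = f.1 x := by
  simp [restrict, Option.map_pmap]

theorem restrict_apply_eq_some_iff (f : PartialInvolution α) (hf) (x y : {x // p x}) :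
    (f.restrict hf).1 x = some y ↔ f.1 x = some y.1 := by
  rw [← map_val_restrict f hf, ← Option.map_some,
    (Option.map_injective Subtype.val_injective).eq_iff]

variable [DecidablePred p]

def extend (g : PartialInvolution {x // p x}) (f₀ : α → Option α)
    (hf₀ : ∀ x y, ¬ p x → f₀ x = some y → ¬ p y ∧ f₀ y = some x) : PartialInvolution α :=
  ⟨fun x => if h : p x then (g.1 ⟨x, h⟩).map Subtype.val else f₀ x, fun i j h => by
    dsimp only at h ⊢
    by_cases hi : p i
    · rw [dif_pos hi, Option.map_eq_some_iff] at h
      obtain ⟨j, hj, rfl⟩ := h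
      rw [dif_pos j.2, g.2 _ _ hj, Option.map_some]
    · rw [dif_neg hi] at h
      obtain ⟨hj, hj'⟩ := hf₀ i j hi h
      rwa [dif_neg hj]⟩

def restrictEquiv (f₀ : α → Option α)
    (hf₀ : ∀ x y, ¬ p x → f₀ x = some y → ¬ p y ∧ f₀ y = some x) :
    {f : PartialInvolution α // ∀ x, ¬ p x → f.1 x = f₀ x} ≃ PartialInvolution {x // p x} where
  toFun f := f.1.restrict fun x y hx hxy => by
    by_contra hy
    have hyx := f.1.2 _ _ hxy
    rw [f.2 y hy] at hyx
    exact (hf₀ y x hy hyx).1 hx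
  invFun g := ⟨extend g f₀ hf₀, fun x hx => dif_neg hx⟩
  left_inv f := by
    refine Subtype.ext <| Subtype.ext <| funext fun x => ?_
    by_cases hx : p x
    · exact (dif_pos hx).trans (map_val_restrict _ _ ⟨x, hx⟩)
    · exact (dif_neg hx).trans (f.2 x hx).symm
  right_inv g := by
    refine Subtype.ext <| funext fun x => Option.ext fun y => ?_
    rw [restrict_apply_eq_some_iff]
    simp only [extend, dif_pos x.2]
    rw [← Option.map_some, (Option.map_injective Subtype.val_injective).eq_iff]

end restrict

theorem card_of_subsingleton [Subsingleton α] [Finite α] :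
    Nat.card (PartialInvolution α) = (Nat.card α + 1) ^ Nat.card α := by
  rw [Nat.card_congr equivFunOfSubsingleton, Nat.card_fun, Finite.card_option]

theorem card_eq_card_fin [Finite α] :
    Nat.card (PartialInvolution α) = Nat.card (PartialInvolution (Fin (Nat.card α))) :=
  Nat.card_congr (congr (Finite.equivFin α))

variable [DecidableEq α]

theorem card_apply_eq_of_forall_mem {p : α} {o : Option α} (ho : ∀ y ∈ o, y = p) :
    Nat.card {f : PartialInvolution α // f.1 p = o} =
      Nat.card (PartialInvolution {x // x ≠ p}) := by
  refine Nat.card_congr <| (Equiv.subtypeEquivRight fun f => ?_).trans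
    (restrictEquiv (p := (· ≠ p)) (fun _ => o) fun x y hx hy => ?_)
  · simp
  · obtain rfl := not_not.1 hx
    obtain rfl := ho y hy
    exact ⟨not_not.2 rfl, hy⟩

theorem card_apply_eq_some_of_ne {p q : α} (hq : q ≠ p) :
    Nat.card {f : PartialInvolution α // f.1 p = some q} =
      Nat.card (PartialInvolution {x // x ≠ p ∧ x ≠ q}) := by
  refine Nat.card_congr <| (Equiv.subtypeEquivRight fun f => ?_).trans
    (restrictEquiv (p := fun x => x ≠ p ∧ x ≠ q) (fun x => if x = p then some q else some p)
      fun x y hx hy => ?_)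
  · refine ⟨fun h x hx => ?_, fun h => by simpa using h p (by simp)⟩
    obtain rfl | rfl : x = p ∨ x = q := by tauto
    · simpa using h
    · simpa [hq] using f.2 _ _ h
  · obtain rfl | rfl : x = p ∨ x = q := by tauto
    · obtain rfl : q = y := by simpa using hy
      simp
    · obtain rfl : p = y := by simpa [hq] using hy
      simp

theorem card_eq_two_mul_add_sum [Fintype α] (p : α) :
    Nat.card (PartialInvolution α) = 2 * Nat.card (PartialInvolution {x // x ≠ p}) +
      ∑ q : {q // q ≠ p}, Nat.card (PartialInvolution {x // x ≠ p ∧ x ≠ q}) := by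
  rw [← Nat.card_congr (Equiv.sigmaFiberEquiv fun f : PartialInvolution α => f.1 p),
    Nat.card_sigma, Fintype.sum_option, Fintype.sum_eq_add_sum_subtype_ne _ p,
    card_apply_eq_of_forall_mem (by simp), card_apply_eq_of_forall_mem (by simp)]
  rw [Finset.sum_congr rfl fun q _ => card_apply_eq_some_of_ne q.2]
  ring

theorem card_fin_add_two (n : ℕ) :
    Nat.card (PartialInvolution (Fin (n + 2))) =
      2 * Nat.card (PartialInvolution (Fin (n + 1))) +
        (n + 1) * Nat.card (PartialInvolution (Fin n)) := by
  have h₁ : Nat.card {x : Fin (n + 2) // x ≠ 0} = n + 1 := by simp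
  have h₂ (q : {q : Fin (n + 2) // q ≠ 0}) : Nat.card {x // x ≠ 0 ∧ x ≠ q.1} = n := by
    rw [Nat.card_eq_fintype_card, Fintype.card_subtype]
    have : Finset.univ.filter (fun x => x ≠ 0 ∧ x ≠ q.1) = (Finset.univ.erase 0).erase q.1 := by
      ext; simp [and_comm]
    rw [this, Finset.card_erase_of_mem (by simpa using q.2),
      Finset.card_erase_of_mem (Finset.mem_univ _)]
    simp
  rw [card_eq_two_mul_add_sum 0, card_eq_card_fin (α := {x // x ≠ 0}), h₁]
  simp only [card_eq_card_fin (α := {x : Fin (n + 2) // x ≠ 0 ∧ x ≠ _}), h₂]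
  simp

def toMatrix (f : PartialInvolution α) : Matrix α α ℚ :=
  Matrix.of fun i j => if f.1 i = some j then 1 else 0

theorem toMatrix_eq_one_iff (f : PartialInvolution α) (i j : α) :
    f.toMatrix i j = 1 ↔ f.1 i = some j := by
  simp [toMatrix]

theorem toMatrix_injective : Function.Injective (toMatrix (α := α)) := fun f g h =>
  Subtype.ext <| funext fun i => Option.ext fun j => by
    rw [← toMatrix_eq_one_iff, h, toMatrix_eq_one_iff]

theorem isPartialInvolution_toMatrix {n : ℕ} (f : PartialInvolution (Fin n)) :
    IsPartialInvolution n f.toMatrix := by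
  simp only [IsPartialInvolution, toMatrix_eq_one_iff]
  refine ⟨fun i j => ?_, fun i j j' hj hj' => ?_, fun i i' j hi hi' => ?_, ?_⟩
  · by_cases h : f.1 i = some j <;> simp [toMatrix, h]
  · exact Option.some_injective _ (hj.symm.trans hj')
  · exact Option.some_injective _ ((f.2 _ _ hi).symm.trans (f.2 _ _ hi'))
  · refine Matrix.IsSymm.ext fun i j => ?_
    simp only [toMatrix, Matrix.of_apply]
    exact if_congr ⟨f.2 j i, f.2 i j⟩ rfl rfl

theorem exists_toMatrix_eq {n : ℕ} {M : Matrix (Fin n) (Fin n) ℚ} (hM : IsPartialInvolution n M) :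
    ∃ f : PartialInvolution (Fin n), f.toMatrix = M := by
  obtain ⟨h01, hrow, -, hsymm⟩ := hM
  have (i : Fin n) : ∃ o : Option (Fin n), ∀ j, o = some j ↔ M i j = 1 := by
    by_cases h : ∃ j, M i j = 1
    · obtain ⟨j, hj⟩ := h
      exact ⟨some j, fun j' => ⟨fun h => Option.some_injective _ h ▸ hj,
        fun hj' => congrArg some (hrow i j j' hj hj')⟩⟩
    · exact ⟨none, fun j => by simp [not_exists.1 h j]⟩
  choose f hf using this
  refine ⟨⟨f, fun i j h => ?_⟩, Matrix.ext fun i j => ?_⟩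
  · rw [hf] at h ⊢
    rwa [hsymm.apply]
  · rcases h01 i j with h | h <;> simp [toMatrix, hf, h]

noncomputable def matrixEquiv (n : ℕ) :
    PartialInvolution (Fin n) ≃ {M : Matrix (Fin n) (Fin n) ℚ // IsPartialInvolution n M} :=
  Equiv.ofBijective (fun f => ⟨f.toMatrix, isPartialInvolution_toMatrix f⟩)
    ⟨fun _ _ h => toMatrix_injective (congrArg Subtype.val h),
      fun ⟨_, hM⟩ => (exists_toMatrix_eq hM).imp fun _ hf => Subtype.ext hf⟩

end PartialInvolution

theorem pnum_eq_card_partialInvolution (n : ℕ) : Pnum n = Nat.card (PartialInvolution (Fin n)) :=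
  (Nat.card_congr (PartialInvolution.matrixEquiv n)).symm

/-- `P_0 = 1`, `P_1 = 2`, and `P_n = 2·P_{n−1} + (n−1)·P_{n−2}` for `n ≥ 2`. -/
theorem stmt12 :
    Pnum 0 = 1 ∧ Pnum 1 = 2 ∧
    ∀ n : ℕ, 2 ≤ n → Pnum n = 2 * Pnum (n - 1) + (n - 1) * Pnum (n - 2) := by
  simp only [pnum_eq_card_partialInvolution]
  refine ⟨?_, ?_, fun n hn => ?_⟩
  · rw [PartialInvolution.card_of_subsingleton, Nat.card_fin]; rfl
  · rw [PartialInvolution.card_of_subsingleton, Nat.card_fin]; rfl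
  · obtain ⟨m, rfl⟩ := Nat.exists_eq_add_of_le' hn
    simpa using PartialInvolution.card_fin_add_two m
end

section
/- The map sending a skew-symmetric (n,n)-clan γ of the largest sect to the matrix π^γ is a bijection from the set ℰ_n of clans in the largest sect onto the set 𝒫_n of partial involutions on n letters; in particular ε_n = P_n. -/
/-- The matrix `π^γ` associated to a clan `γ = (σ, s)` of the largest sect: the
`(i,j)`-entry (with `i, j` among the first `n` positions) is `1` exactly when positions
`i` and `2n+1−j` carry matching natural numbers, i.e. when `σ` sends position `i` to
position `2n+1−j` (0-indexed: `σ ⟨i⟩ = ⟨2n−1−j⟩`); all other entries are `0`. -/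
def clanMatrix (n : ℕ) (σ : Equiv.Perm (Fin (2 * n))) : Matrix (Fin n) (Fin n) ℚ :=
  fun i j =>
    if σ ⟨i.val, by have := i.isLt; omega⟩ = ⟨2 * n - 1 - j.val, by have := j.isLt; omega⟩
    then 1 else 0

namespace Stmt13Aux

variable {n : ℕ}

/-- Embedding of the first half positions. -/
def lft (i : Fin n) : Fin (2 * n) := ⟨i.val, by have := i.isLt; omega⟩

lemma val_rev2 (x : Fin (2 * n)) : x.rev.val = 2 * n - 1 - x.val := by
  have := x.isLt
  rw [Fin.val_rev]; omega

lemma lft_inj {i j : Fin n} (h : lft i = lft j) : i = j := by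
  have h2 : (lft i).val = (lft j).val := congrArg Fin.val h
  exact Fin.ext h2

lemma rev_lft_inj {i j : Fin n} (h : (lft i).rev = (lft j).rev) : i = j :=
  lft_inj (Fin.rev_injective h)

lemma lft_lt (i : Fin n) : (lft i).val < n := i.isLt

lemma rev_lft_ge (j : Fin n) : n ≤ ((lft j).rev).val := by
  have := j.isLt
  rw [val_rev2]
  simp only [lft]
  omega

lemma clanMatrix_apply (σ : Equiv.Perm (Fin (2 * n))) (i j : Fin n) :
    clanMatrix n σ i j = if σ (lft i) = (lft j).rev then 1 else 0 := by
  have h : (⟨2 * n - 1 - j.val, by have := j.isLt; omega⟩ : Fin (2 * n)) = (lft j).rev := by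
    apply Fin.ext
    rw [val_rev2]
    rfl
  rw [clanMatrix, h]
  rfl

lemma clanMatrix_eq_one_iff (σ : Equiv.Perm (Fin (2 * n))) (i j : Fin n) :
    clanMatrix n σ i j = 1 ↔ σ (lft i) = (lft j).rev := by
  rw [clanMatrix_apply]
  split
  · simpa
  · next h => simp [h]

/-- Key symmetry: for a clan, `σ (lft i) = rev (lft j) ↔ σ (lft j) = rev (lft i)`. -/
lemma sigma_symm {σ : Equiv.Perm (Fin (2 * n))}
    (hinv : Function.Involutive σ) (hrev : ∀ i, σ (Fin.rev i) = Fin.rev (σ i))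
    {i j : Fin n} (h : σ (lft i) = (lft j).rev) : σ (lft j) = (lft i).rev := by
  have h1 : lft i = σ ((lft j).rev) := by rw [← h, hinv]
  rw [hrev] at h1
  have := congrArg Fin.rev h1
  rwa [Fin.rev_rev, eq_comm] at this

/-- The matrix of a largest sect clan is a partial involution. -/
lemma mapsTo_pi {σ : Equiv.Perm (Fin (2 * n))} {s : Fin (2 * n) → Bool}
    (h : IsLargestSectClan n σ s) : IsPartialInvolution n (clanMatrix n σ) := by
  obtain ⟨⟨hinv, _, _, hrev, _⟩, _, _⟩ := h
  refine ⟨fun i j => ?_, fun i j j' h1 h2 => ?_, fun i i' j h1 h2 => ?_, ?_⟩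
  · rw [clanMatrix_apply]; split <;> simp
  · rw [clanMatrix_eq_one_iff] at h1 h2
    exact rev_lft_inj (h1 ▸ h2 ▸ rfl)
  · rw [clanMatrix_eq_one_iff] at h1 h2
    exact lft_inj (σ.injective (h1.trans h2.symm))
  · apply Matrix.IsSymm.ext
    intro i j
    rw [clanMatrix_apply, clanMatrix_apply]
    by_cases h : σ (lft i) = (lft j).rev
    · rw [if_pos h, if_pos (sigma_symm hinv hrev h)]
    · rw [if_neg h, if_neg (fun h' => h (sigma_symm hinv hrev h'))]

/-- In a largest sect clan, the sign function is determined by `σ`. -/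
lemma s_determined {σ : Equiv.Perm (Fin (2 * n))} {s : Fin (2 * n) → Bool}
    (h : IsLargestSectClan n σ s) :
    s = fun i => decide (σ i ≠ i ∨ n ≤ i.val) := by
  obtain ⟨⟨_, hnorm, _, _, _⟩, hfix, _⟩ := h
  funext i
  by_cases hi : σ i = i
  · have := hfix i hi
    cases hs : s i
    · have h2 : ¬ n ≤ i.val := by simp [hs] at this; omega
      simp [hi, h2]
    · have h2 : n ≤ i.val := by simp [hs] at this; omega
      simp [hi, h2]
  · rw [hnorm i hi]
    simp [hi]

/-- `σ` is determined by the matrix among largest sect clans. -/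
lemma sigma_determined {σ σ' : Equiv.Perm (Fin (2 * n))} {s s' : Fin (2 * n) → Bool}
    (h : IsLargestSectClan n σ s) (h' : IsLargestSectClan n σ' s')
    (hM : clanMatrix n σ = clanMatrix n σ') : σ = σ' := by
  obtain ⟨⟨hinv, _, _, hrev, _⟩, _, hsect⟩ := h
  obtain ⟨⟨hinv', _, _, hrev', _⟩, _, hsect'⟩ := h'
  -- matrix entries agree
  have key : ∀ i j : Fin n, σ (lft i) = (lft j).rev ↔ σ' (lft i) = (lft j).rev := by
    intro i j
    rw [← clanMatrix_eq_one_iff, ← clanMatrix_eq_one_iff, hM]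
  -- first half
  have half : ∀ x : Fin (2 * n), x.val < n → σ x = σ' x := by
    intro x hx
    set i : Fin n := ⟨x.val, hx⟩ with hi
    have hxi : x = lft i := by apply Fin.ext; rfl
    by_cases hfx : σ x = x
    · by_cases hfx' : σ' x = x
      · rw [hfx, hfx']
      · exfalso
        have hge : n ≤ (σ' x).val := by
          have := (hsect' x hfx').mp hx
          omega
        have hlt2 : (σ' x).val < 2 * n := (σ' x).isLt
        set j : Fin n := ⟨2 * n - 1 - (σ' x).val, by omega⟩ with hj
        have hσ'x : σ' (lft i) = (lft j).rev := by
          rw [← hxi]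
          apply Fin.ext
          rw [val_rev2]
          simp only [lft, hj]
          omega
        have := (key i j).mpr hσ'x
        rw [← hxi, hfx] at this
        have := congrArg Fin.val this
        rw [val_rev2] at this
        simp only [lft, hj] at this
        omega
    · have hge : n ≤ (σ x).val := by
        have := (hsect x hfx).mp hx
        omega
      have hlt2 : (σ x).val < 2 * n := (σ x).isLt
      set j : Fin n := ⟨2 * n - 1 - (σ x).val, by omega⟩ with hj
      have hσx : σ (lft i) = (lft j).rev := by
        rw [← hxi]
        apply Fin.ext
        rw [val_rev2]
        simp only [lft, hj]
        omega
      have := (key i j).mp hσx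
      rw [← hxi] at this hσx
      rw [this, hσx]
  apply Equiv.ext
  intro x
  by_cases hx : x.val < n
  · exact half x hx
  · have hx2 : x.val < 2 * n := x.isLt
    have hrx : (Fin.rev x).val < n := by rw [val_rev2]; omega
    have : x = Fin.rev (Fin.rev x) := (Fin.rev_rev x).symm
    rw [this, hrev, hrev', half _ hrx]

/-! ### Surjectivity construction -/

variable (M : Matrix (Fin n) (Fin n) ℚ)

/-- Row function: where row `i` of `M` sends position `i`. -/
noncomputable def rowFun (i : Fin n) : Fin (2 * n) :=
  if h : ∃ j, M i j = 1 then (lft h.choose).rev else lft i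

variable {M}

lemma rowFun_of_one (hM : IsPartialInvolution n M) {i j : Fin n} (h : M i j = 1) :
    rowFun M i = (lft j).rev := by
  have hex : ∃ j, M i j = 1 := ⟨j, h⟩
  rw [rowFun, dif_pos hex, hM.2.1 i _ _ hex.choose_spec h]

lemma rowFun_of_none {i : Fin n} (h : ∀ j, M i j ≠ 1) : rowFun M i = lft i := by
  rw [rowFun, dif_neg (fun ⟨j, hj⟩ => h j hj)]

lemma rowFun_cases (hM : IsPartialInvolution n M) (i : Fin n) :
    ((∀ j, M i j ≠ 1) ∧ rowFun M i = lft i) ∨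
      ∃ j, M i j = 1 ∧ rowFun M i = (lft j).rev := by
  by_cases h : ∃ j, M i j = 1
  · exact Or.inr ⟨h.choose, h.choose_spec, rowFun_of_one hM h.choose_spec⟩
  · push_neg at h
    exact Or.inl ⟨h, rowFun_of_none h⟩

lemma rowFun_symm (hM : IsPartialInvolution n M) {i j : Fin n}
    (h : rowFun M i = (lft j).rev) : rowFun M j = (lft i).rev := by
  rcases rowFun_cases hM i with ⟨_, he⟩ | ⟨j', hj', he⟩
  · exfalso
    rw [he] at h
    have := congrArg Fin.val h
    rw [val_rev2] at this
    have h1 := lft_lt i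
    have h2 := rev_lft_ge j
    rw [val_rev2] at h2
    omega
  · rw [he] at h
    have hjj : j' = j := rev_lft_inj h
    rw [hjj] at hj'
    have hji : M j i = 1 := by rw [hM.2.2.2.apply i j]; exact hj'
    exact rowFun_of_one hM hji

/-- The involution on `Fin (2n)` built from a partial involution matrix. -/
noncomputable def matFun (M : Matrix (Fin n) (Fin n) ℚ) (x : Fin (2 * n)) : Fin (2 * n) :=
  if h : x.val < n then rowFun M ⟨x.val, h⟩
  else (rowFun M ⟨2 * n - 1 - x.val, by have := x.isLt; omega⟩).rev

lemma matFun_lft (i : Fin n) : matFun M (lft i) = rowFun M i := by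
  rw [matFun, dif_pos (lft_lt i)]
  rfl

lemma matFun_rev_lft (i : Fin n) : matFun M ((lft i).rev) = (rowFun M i).rev := by
  have h1 := rev_lft_ge i
  rw [matFun, dif_neg (by omega)]
  have hidx : (⟨2 * n - 1 - ((lft i).rev).val,
      by have := ((lft i).rev).isLt; omega⟩ : Fin n) = i := by
    apply Fin.ext
    show 2 * n - 1 - ((lft i).rev).val = i.val
    rw [val_rev2]
    have := i.isLt
    simp only [lft]
    omega
  rw [hidx]

lemma fin_half_cases (x : Fin (2 * n)) :
    (∃ i : Fin n, x = lft i) ∨ ∃ i : Fin n, x = (lft i).rev := by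
  have hx := x.isLt
  by_cases h : x.val < n
  · exact Or.inl ⟨⟨x.val, h⟩, Fin.ext rfl⟩
  · refine Or.inr ⟨⟨2 * n - 1 - x.val, by omega⟩, ?_⟩
    apply Fin.ext
    rw [val_rev2]
    simp only [lft]
    omega

lemma matFun_involutive (hM : IsPartialInvolution n M) :
    Function.Involutive (matFun M) := by
  intro x
  rcases fin_half_cases x with ⟨i, rfl⟩ | ⟨i, rfl⟩
  · rw [matFun_lft]
    rcases rowFun_cases hM i with ⟨_, he⟩ | ⟨j, _, he⟩
    · rw [he, matFun_lft, he]
    · rw [he, matFun_rev_lft, rowFun_symm hM he, Fin.rev_rev]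
  · rw [matFun_rev_lft]
    rcases rowFun_cases hM i with ⟨_, he⟩ | ⟨j, _, he⟩
    · rw [he, matFun_rev_lft, he]
    · rw [he, Fin.rev_rev, matFun_lft, rowFun_symm hM he]

/-- The permutation built from a partial involution matrix. -/
noncomputable def matPerm (hM : IsPartialInvolution n M) : Equiv.Perm (Fin (2 * n)) :=
  (matFun_involutive hM).toPerm _

lemma matPerm_apply (hM : IsPartialInvolution n M) (x : Fin (2 * n)) :
    matPerm hM x = matFun M x := rfl

lemma matPerm_rev (hM : IsPartialInvolution n M) (x : Fin (2 * n)) :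
    matPerm hM (Fin.rev x) = Fin.rev (matPerm hM x) := by
  rw [matPerm_apply, matPerm_apply]
  rcases fin_half_cases x with ⟨i, rfl⟩ | ⟨i, rfl⟩
  · rw [matFun_rev_lft, matFun_lft]
  · rw [Fin.rev_rev, matFun_lft, matFun_rev_lft, Fin.rev_rev]

/-- The sign function for the constructed clan. -/
noncomputable def matSign (hM : IsPartialInvolution n M) (x : Fin (2 * n)) : Bool :=
  decide (matPerm hM x ≠ x ∨ n ≤ x.val)

lemma matSign_fixed (hM : IsPartialInvolution n M) {x : Fin (2 * n)}
    (h : matPerm hM x = x) : matSign hM x = decide (n ≤ x.val) := by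
  simp [matSign, h]

lemma construction_sect (hM : IsPartialInvolution n M) :
    IsLargestSectClan n (matPerm hM) (matSign hM) := by
  have hfix_rev : ∀ x : Fin (2 * n), matPerm hM x = x → matPerm hM (Fin.rev x) = Fin.rev x := by
    intro x hx
    rw [matPerm_rev, hx]
  have hnonfix : ∀ x : Fin (2 * n), matPerm hM x ≠ x →
      (x.val < n ↔ ¬(matPerm hM x).val < n) := by
    intro x hx
    rcases fin_half_cases x with ⟨i, rfl⟩ | ⟨i, rfl⟩
    · rcases rowFun_cases hM i with ⟨_, he⟩ | ⟨j, _, he⟩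
      · exact absurd ((matFun_lft i).trans he) hx
      · have : matPerm hM (lft i) = (lft j).rev := (matFun_lft i).trans he
        rw [this]
        have h1 := lft_lt i
        have h2 := rev_lft_ge j
        constructor
        · intro _; omega
        · intro _; exact h1
    · rcases rowFun_cases hM i with ⟨_, he⟩ | ⟨j, _, he⟩
      · exact absurd ((matFun_rev_lft i).trans (by rw [he])) hx
      · have : matPerm hM ((lft i).rev) = lft j := by
          rw [matPerm_apply, matFun_rev_lft, he, Fin.rev_rev]
        rw [this]
        have h1 := rev_lft_ge i
        have h2 := lft_lt j
        constructor
        · intro h3; omega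
        · intro h3; omega
  refine ⟨⟨matFun_involutive hM, ?_, ?_, matPerm_rev hM, ?_⟩, ?_, hnonfix⟩
  · intro i hi
    simp [matSign, hi]
  · -- card condition via rev bijection
    apply Finset.card_bij' (fun a _ => Fin.rev a) (fun a _ => Fin.rev a)
    · intro a ha
      simp only [Finset.mem_filter, Finset.mem_univ, true_and] at ha ⊢
      obtain ⟨hfa, hsa⟩ := ha
      rw [matSign_fixed hM hfa] at hsa
      have hna : n ≤ a.val := by simpa using hsa
      have hf : matPerm hM a.rev = a.rev := hfix_rev a hfa
      refine ⟨hf, ?_⟩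
      rw [matSign_fixed hM hf]
      have := a.isLt
      have : a.rev.val < n := by rw [val_rev2]; omega
      simp
      omega
    · intro a ha
      simp only [Finset.mem_filter, Finset.mem_univ, true_and] at ha ⊢
      obtain ⟨hfa, hsa⟩ := ha
      rw [matSign_fixed hM hfa] at hsa
      have hna : a.val < n := by simpa using hsa
      have hf : matPerm hM a.rev = a.rev := hfix_rev a hfa
      refine ⟨hf, ?_⟩
      rw [matSign_fixed hM hf]
      have ha2 := a.isLt
      have : n ≤ a.rev.val := by rw [val_rev2]; omega
      simp
      omega
    · intro a _; exact Fin.rev_rev a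
    · intro a _; exact Fin.rev_rev a
  · intro i hi
    rw [matSign_fixed hM hi, matSign_fixed hM (hfix_rev i hi)]
    have h1 := i.isLt
    rw [val_rev2]
    rcases le_or_gt n i.val with h | h
    · have : ¬ n ≤ 2 * n - 1 - i.val := by omega
      simp [h, this]
    · have : n ≤ 2 * n - 1 - i.val := by omega
      have h2 : ¬ n ≤ i.val := by omega
      simp [h2, this]
  · intro i hi
    rw [matSign_fixed hM hi, decide_eq_false_iff_not]
    exact not_le

lemma construction_matrix (hM : IsPartialInvolution n M) :
    clanMatrix n (matPerm hM) = M := by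
  funext i j
  rw [clanMatrix_apply]
  have hfl : matPerm hM (lft i) = rowFun M i := matFun_lft i
  rcases hM.1 i j with h0 | h1
  · rw [h0, if_neg]
    intro hc
    rw [hfl] at hc
    rcases rowFun_cases hM i with ⟨_, he⟩ | ⟨j', hj', he⟩
    · rw [he] at hc
      have := congrArg Fin.val hc
      have h1 := lft_lt i
      have h2 := rev_lft_ge j
      omega
    · rw [he] at hc
      have : j' = j := rev_lft_inj hc
      subst this
      rw [hj'] at h0
      exact one_ne_zero h0
  · rw [h1, if_pos]
    rw [hfl]
    exact rowFun_of_one hM h1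

end Stmt13Aux

/-- the map `γ ↦ π^γ` is a bijection from the set `ℰ_n` of skew-symmetric
`(n,n)`-clans of the largest sect onto the set `𝒫_n` of partial involutions on `n`
letters; in particular `ε_n = P_n`. -/
theorem stmt13 (n : ℕ) :
    Set.BijOn (fun p : Equiv.Perm (Fin (2 * n)) × (Fin (2 * n) → Bool) => clanMatrix n p.1)
      {p | IsLargestSectClan n p.1 p.2} {M | IsPartialInvolution n M} ∧
    epsnum n = Pnum n := by
  have hbij : Set.BijOn
      (fun p : Equiv.Perm (Fin (2 * n)) × (Fin (2 * n) → Bool) => clanMatrix n p.1)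
      {p | IsLargestSectClan n p.1 p.2} {M | IsPartialInvolution n M} := by
    refine ⟨fun p hp => Stmt13Aux.mapsTo_pi hp, fun p hp q hq hpq => ?_, fun M hM => ?_⟩
    · have hσ : p.1 = q.1 := Stmt13Aux.sigma_determined hp hq hpq
      have hs : p.2 = q.2 := by
        rw [Stmt13Aux.s_determined hp, Stmt13Aux.s_determined hq, hσ]
      exact Prod.ext hσ hs
    · exact ⟨(Stmt13Aux.matPerm hM, Stmt13Aux.matSign hM), Stmt13Aux.construction_sect hM,
        Stmt13Aux.construction_matrix hM⟩
  exact ⟨hbij, Nat.card_congr (hbij.equiv _)⟩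
end
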